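/- arXiv:1411.7935 — 7 statements merged into one kernel-verified Lean document; each statement's English description precedes it below -/
import Mathlib

section
/- If the linear program max{c^T x : x ∈ ℝ^n, A x ≤ b} is feasible (P = {x : A x ≤ b} is nonempty) and bounded (there is M ∈ ℝ with c^T x ≤ M for all x ∈ P), and rank(A) = n, then the LP has an optimal solution that is a vertex: there exists a vertex x* of P with c^T x* ≥ c^T y for all y ∈ P. -/
open Matrix

/-- The rank of the set of rows of `A` that are active at `x` (i.e. `aᵢᵀ x = bᵢ`). -/
noncomputable def activeRank {m n : ℕ} (A : Matrix (Fin m) (Fin n) ℝ) (b : Fin m → ℝ)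
    (x : Fin n → ℝ) : ℕ :=
  Module.finrank ℝ (Submodule.span ℝ {r : Fin n → ℝ | ∃ i, A i ⬝ᵥ x = b i ∧ r = A i})

/-- `x` is a vertex of the polyhedron `P = {x | A x ≤ b}`:
it is feasible and the rows of `A` active at `x` have rank `n`. -/
def IsVertex {m n : ℕ} (A : Matrix (Fin m) (Fin n) ℝ) (b : Fin m → ℝ)
    (x : Fin n → ℝ) : Prop :=
  A.mulVec x ≤ b ∧ activeRank A b x = n

/-!
Moving a feasible point `x` along a direction `e` orthogonal to the rows active at `x` keeps those
rows active. If moreover `aᵢ ⬝ e > 0` for some row, stepping until the first such constraint becomes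
tight gives a feasible point whose active rows span a strictly larger space. While the active rows
at `x` do not span everything there is such a direction with `c ⬝ e ≥ 0`: take `±d` for a nonzero
`d` orthogonal to them; `A d ≠ 0` as `rank A = n`, and boundedness of `c` rules out a feasible ray
along which `c` increases. Hence every feasible point is dominated by a vertex. A vertex is
determined by its set of active rows, so there are finitely many, and the best one is optimal.
-/

open Module Submodule

section LinearAlgebra

variable {K ι κ : Type*} [Field K] [Fintype κ]

theorem Submodule.exists_ne_zero_forall_dotProduct_eq_zero {W : Submodule K (κ → K)}
    (hW : W ≠ ⊤) : ∃ d ≠ 0, ∀ v ∈ W, v ⬝ᵥ d = 0 := by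
  classical
  obtain ⟨f, hf, hWf⟩ := W.exists_le_ker_of_lt_top hW.lt_top
  refine ⟨(dotProductEquiv K κ).symm f, by simpa using hf, fun v hv => ?_⟩
  rw [dotProduct_comm, ← dotProductEquiv_apply_apply, LinearEquiv.apply_symm_apply]
  exact hWf hv

theorem eq_zero_of_span_eq_top_of_forall_dotProduct_eq_zero {S : Set (κ → K)}
    (hS : span K S = ⊤) {w : κ → K} (h : ∀ v ∈ S, v ⬝ᵥ w = 0) : w = 0 := by
  refine dotProduct_eq_zero w fun u => ?_
  have hu : u ∈ span K S := hS ▸ mem_top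
  rw [dotProduct_comm]
  induction hu using span_induction with
  | mem v hv => exact h v hv
  | zero => exact zero_dotProduct w
  | add u v _ _ hu hv => rw [add_dotProduct, hu, hv, add_zero]
  | smul a u _ hu => rw [smul_dotProduct, hu, smul_zero]

theorem Matrix.span_row_eq_top_of_rank_eq [Finite ι] {A : Matrix ι κ K}
    (hA : A.rank = Fintype.card κ) : span K (Set.range A.row) = ⊤ := by
  rw [eq_top_iff_finrank_eq, ← rank_eq_finrank_span_row, hA, finrank_fintype_fun_eq_card]

theorem Matrix.eq_zero_of_mulVec_eq_zero_of_span_row_eq_top {A : Matrix ι κ K}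
    (hA : span K (Set.range A.row) = ⊤) {d : κ → K} (hd : A *ᵥ d = 0) : d = 0 :=
  eq_zero_of_span_eq_top_of_forall_dotProduct_eq_zero hA <| by
    rintro _ ⟨i, rfl⟩
    exact congrFun hd i

end LinearAlgebra

section ActiveSpan

variable {K ι κ : Type*} [Field K] [Fintype κ] {A : Matrix ι κ K} {b : ι → K} {x y e : κ → K}

-- `activeRank A b x` is `finrank (activeSpan A b x)` by definition.
def activeSpan (A : Matrix ι κ K) (b : ι → K) (x : κ → K) : Submodule K (κ → K) :=
  span K {r | ∃ i, A i ⬝ᵥ x = b i ∧ r = A i}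

theorem row_mem_activeSpan {i : ι} (hi : A i ⬝ᵥ x = b i) : A i ∈ activeSpan A b x :=
  subset_span ⟨i, hi, rfl⟩

theorem eq_of_activeSpan_eq_top (hx : activeSpan A b x = ⊤)
    (hxy : ∀ i, A i ⬝ᵥ x = b i → A i ⬝ᵥ y = b i) : x = y := by
  refine sub_eq_zero.1 (eq_zero_of_span_eq_top_of_forall_dotProduct_eq_zero hx ?_)
  rintro _ ⟨i, hi, rfl⟩
  rw [dotProduct_sub, hi, hxy i hi, sub_self]

theorem finite_setOf_activeSpan_eq_top [Finite ι] (A : Matrix ι κ K) (b : ι → K) :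
    {x | activeSpan A b x = ⊤}.Finite :=
  Set.Finite.of_finite_image (f := fun x => {i | A i ⬝ᵥ x = b i}) (Set.toFinite _)
    fun _ hx _ _ hxy => eq_of_activeSpan_eq_top hx fun i hi => (Set.ext_iff.1 hxy i).1 hi

theorem activeSpan_lt_activeSpan_add_smul {t : K} {j : ι}
    (he : ∀ v ∈ activeSpan A b x, v ⬝ᵥ e = 0) (hje : (A *ᵥ e) j ≠ 0)
    (hj : (A *ᵥ (x + t • e)) j = b j) : activeSpan A b x < activeSpan A b (x + t • e) := by
  refine SetLike.lt_iff_le_and_exists.2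
    ⟨span_mono ?_, A j, row_mem_activeSpan hj, fun h => hje (he _ h)⟩
  rintro _ ⟨i, hi, rfl⟩
  refine ⟨i, ?_, rfl⟩
  rw [dotProduct_add, dotProduct_smul, hi, he _ (row_mem_activeSpan hi), smul_zero, add_zero]

end ActiveSpan

section OrderedField

variable {𝕜 ι κ : Type*} [Field 𝕜] [LinearOrder 𝕜] [IsStrictOrderedRing 𝕜] [Fintype κ]
  {A : Matrix ι κ 𝕜} {b : ι → 𝕜} {c x d e : κ → 𝕜} {M : 𝕜}

theorem nonpos_of_forall_add_mul_le {p q : 𝕜} (h : ∀ t, 0 ≤ t → p + t * q ≤ M) : q ≤ 0 := by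
  by_contra! hq
  have := h ((|M - p| + 1) / q) (by positivity)
  rw [div_mul_cancel₀ _ hq.ne'] at this
  linarith [le_abs_self (M - p)]

theorem mulVec_add_smul_le (hx : A *ᵥ x ≤ b) (he : A *ᵥ e ≤ 0) {t : 𝕜} (ht : 0 ≤ t) :
    A *ᵥ (x + t • e) ≤ b := by
  rw [mulVec_add, mulVec_smul]
  simpa using add_le_add hx (smul_nonpos_of_nonneg_of_nonpos ht he)

theorem dotProduct_nonpos_of_mulVec_nonpos (hbdd : ∀ y, A *ᵥ y ≤ b → c ⬝ᵥ y ≤ M)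
    (hx : A *ᵥ x ≤ b) (he : A *ᵥ e ≤ 0) : c ⬝ᵥ e ≤ 0 :=
  nonpos_of_forall_add_mul_le fun t ht => by
    simpa [dotProduct_add, dotProduct_smul] using hbdd _ (mulVec_add_smul_le hx he ht)

theorem exists_improving_direction (hbdd : ∀ y, A *ᵥ y ≤ b → c ⬝ᵥ y ≤ M)
    (hx : A *ᵥ x ≤ b) (hd : A *ᵥ d ≠ 0) :
    ∃ e, (e = d ∨ e = -d) ∧ 0 ≤ c ⬝ᵥ e ∧ ∃ i, 0 < (A *ᵥ e) i := by
  wlog hcd : 0 ≤ c ⬝ᵥ d generalizing d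
  · obtain ⟨e, hde, hce, hAe⟩ :=
      this (d := -d) (by rwa [mulVec_neg, neg_ne_zero]) (by rw [dotProduct_neg]; linarith)
    exact ⟨e, by rwa [neg_neg, or_comm] at hde, hce, hAe⟩
  by_cases hpos : ∃ i, 0 < (A *ᵥ d) i
  · exact ⟨d, .inl rfl, hcd, hpos⟩
  have hAd : A *ᵥ d ≤ 0 := by simpa [Pi.le_def] using hpos
  have hcd0 : c ⬝ᵥ d = 0 := le_antisymm (dotProduct_nonpos_of_mulVec_nonpos hbdd hx hAd) hcd
  obtain ⟨i, hi⟩ : ∃ i, (A *ᵥ d) i < 0 := by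
    by_contra! h
    exact hd (le_antisymm hAd h)
  exact ⟨-d, .inr rfl, by rw [dotProduct_neg, hcd0, neg_zero], i, by simpa [mulVec_neg]⟩

theorem exists_mulVec_add_smul_le_eq [Fintype ι] (hx : A *ᵥ x ≤ b) (he : ∃ i, 0 < (A *ᵥ e) i) :
    ∃ t : 𝕜, 0 ≤ t ∧ A *ᵥ (x + t • e) ≤ b ∧ ∃ j, 0 < (A *ᵥ e) j ∧ (A *ᵥ (x + t • e)) j = b j := by
  classical
  let J := Finset.univ.filter fun i => 0 < (A *ᵥ e) i
  let ratio i := (b i - (A *ᵥ x) i) / (A *ᵥ e) i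
  -- the minimum-ratio test: `j` is the first constraint to become tight along `e`
  obtain ⟨j, hjJ, hj⟩ := J.exists_min_image ratio (by simpa [J, Finset.Nonempty] using he)
  have hje : 0 < (A *ᵥ e) j := (Finset.mem_filter.1 hjJ).2
  have hstep (i) : (A *ᵥ (x + ratio j • e)) i = (A *ᵥ x) i + ratio j * (A *ᵥ e) i := by
    simp [mulVec_add, mulVec_smul]
  have ht : 0 ≤ ratio j := div_nonneg (sub_nonneg.2 (hx j)) hje.le
  refine ⟨ratio j, ht, fun i => ?_, j, hje, ?_⟩
  · rw [hstep]
    rcases lt_or_ge 0 ((A *ᵥ e) i) with hie | hie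
    · have := hj i (by simp [J, hie])
      rw [le_div_iff₀ hie] at this
      linarith
    · linarith [hx i, mul_nonpos_of_nonneg_of_nonpos ht hie]
  · rw [hstep, div_mul_cancel₀ _ hje.ne', add_sub_cancel]

theorem exists_activeSpan_lt [Fintype ι] (hbdd : ∀ y, A *ᵥ y ≤ b → c ⬝ᵥ y ≤ M)
    (hA : span 𝕜 (Set.range A.row) = ⊤) (hx : A *ᵥ x ≤ b) (hne : activeSpan A b x ≠ ⊤) :
    ∃ y, A *ᵥ y ≤ b ∧ c ⬝ᵥ x ≤ c ⬝ᵥ y ∧ activeSpan A b x < activeSpan A b y := by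
  obtain ⟨d, hd0, hd⟩ := exists_ne_zero_forall_dotProduct_eq_zero hne
  obtain ⟨e, hde, hce, hAe⟩ := exists_improving_direction hbdd hx fun h =>
    hd0 (eq_zero_of_mulVec_eq_zero_of_span_row_eq_top hA h)
  have he : ∀ v ∈ activeSpan A b x, v ⬝ᵥ e = 0 := by
    rcases hde with rfl | rfl <;> simpa [dotProduct_neg]
  obtain ⟨t, ht, hfeas, j, hje, hj⟩ := exists_mulVec_add_smul_le_eq hx hAe
  refine ⟨x + t • e, hfeas, ?_, activeSpan_lt_activeSpan_add_smul he hje.ne' hj⟩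
  rw [dotProduct_add, dotProduct_smul, smul_eq_mul]
  exact le_add_of_nonneg_right (mul_nonneg ht hce)

theorem exists_activeSpan_eq_top_le [Fintype ι] (hbdd : ∀ y, A *ᵥ y ≤ b → c ⬝ᵥ y ≤ M)
    (hA : span 𝕜 (Set.range A.row) = ⊤) (hx : A *ᵥ x ≤ b) :
    ∃ v, (A *ᵥ v ≤ b ∧ activeSpan A b v = ⊤) ∧ c ⬝ᵥ x ≤ c ⬝ᵥ v := by
  induction hW : activeSpan A b x using WellFoundedGT.induction generalizing x with
  | _ W ih =>
    by_cases htop : W = ⊤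
    · exact ⟨x, ⟨hx, hW ▸ htop⟩, le_rfl⟩
    obtain ⟨y, hy, hxy, hlt⟩ := exists_activeSpan_lt hbdd hA hx (hW ▸ htop)
    obtain ⟨v, hv, hyv⟩ := ih _ (hW ▸ hlt) hy rfl
    exact ⟨v, hv, hxy.trans hyv⟩

end OrderedField

theorem isVertex_iff {m n : ℕ} {A : Matrix (Fin m) (Fin n) ℝ} {b : Fin m → ℝ} {x : Fin n → ℝ} :
    IsVertex A b x ↔ A *ᵥ x ≤ b ∧ activeSpan A b x = ⊤ := by
  rw [IsVertex, eq_top_iff_finrank_eq, finrank_fin_fun]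
  rfl

/-- If the LP `max {cᵀx : Ax ≤ b}` is feasible and bounded and `rank A = n`,
then it has an optimal solution that is a vertex. -/
theorem lp_feasible_bounded_has_optimal_vertex {m n : ℕ}
    (A : Matrix (Fin m) (Fin n) ℝ) (b : Fin m → ℝ) (c : Fin n → ℝ)
    (hfeas : ∃ x : Fin n → ℝ, A.mulVec x ≤ b)
    (hbdd : ∃ M : ℝ, ∀ x : Fin n → ℝ, A.mulVec x ≤ b → c ⬝ᵥ x ≤ M)
    (hrank : A.rank = n) :
    ∃ xstar : Fin n → ℝ, IsVertex A b xstar ∧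
      ∀ y : Fin n → ℝ, A.mulVec y ≤ b → c ⬝ᵥ y ≤ c ⬝ᵥ xstar := by
  obtain ⟨x₀, hx₀⟩ := hfeas
  obtain ⟨M, hM⟩ := hbdd
  have hA : span ℝ (Set.range A.row) = ⊤ :=
    span_row_eq_top_of_rank_eq (hrank.trans (Fintype.card_fin n).symm)
  set V := {v | A *ᵥ v ≤ b ∧ activeSpan A b v = ⊤}
  have hV : V.Finite := (finite_setOf_activeSpan_eq_top A b).subset fun _ hv => hv.2
  obtain ⟨v₀, hv₀, -⟩ := exists_activeSpan_eq_top_le hM hA hx₀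
  obtain ⟨xstar, hxstar, hmax⟩ := V.exists_max_image (c ⬝ᵥ ·) hV ⟨v₀, hv₀⟩
  refine ⟨xstar, isVertex_iff.2 hxstar, fun y hy => ?_⟩
  obtain ⟨v, hv, hyv⟩ := exists_activeSpan_eq_top_le hM hA hy
  exact hyv.trans (hmax v hv)
end

section
/- Two distinct vertices x1 ≠ x2 of P = {x ∈ ℝ^n : A x ≤ b} are adjacent if and only if there exists c ∈ ℝ^n such that the set of maximizers of c^T x over P is exactly the line segment spanned by x1 and x2. -/
open Matrix

/-- Two vertices are adjacent if there are `n - 1` linearly independent rows of `A`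
whose constraints are active at both. -/
def AdjacentVertices {m n : ℕ} (A : Matrix (Fin m) (Fin n) ℝ) (b : Fin m → ℝ)
    (x₁ x₂ : Fin n → ℝ) : Prop :=
  ∃ S : Finset (Fin m), S.card = n - 1 ∧
    LinearIndependent ℝ (fun i : S => A i.1) ∧
    ∀ i ∈ S, A i ⬝ᵥ x₁ = b i ∧ A i ⬝ᵥ x₂ = b i


/-!
If `S` is a set of `n - 1` independent constraints tight at both vertices, then for
`c = ∑ i ∈ S, aᵢ` the maximizers of `cᵀx` over `P` are exactly the points of `P` at which `S` is
tight. These form the part of `P` on the line through `x₁` and `x₂`, and a constraint tight at a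
vertex but not containing that line stops the line at that vertex, so this face is the segment.

Conversely, let `x₀` be the midpoint of the segment of maximizers. A direction `v` annihilated by
the constraints tight at `x₀` can be followed a little both ways inside `P`, so `cᵀv = 0` and
`x₀ + t v` is again a maximizer, hence on the segment: `v` is a multiple of `x₂ - x₁`. So the
constraints tight at `x₀`, which are also tight at `x₁` and `x₂`, have rank at least `n - 1`.
-/

open Module Submodule Filter Topology

theorem Matrix.finrank_span_range_add_finrank_ker {ι o K : Type*} [Finite ι] [Fintype o]
    [Field K] (B : Matrix ι o K) :
    finrank K (span K (Set.range B.row)) + finrank K (LinearMap.ker B.mulVecLin) =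
      Fintype.card o := by
  rw [← B.rank_eq_finrank_span_row, rank, LinearMap.finrank_range_add_finrank_ker,
    finrank_fintype_fun_eq_card]

theorem Matrix.mulVec_add_smul_apply {ι o R : Type*} [Fintype o] [CommSemiring R]
    (A : Matrix ι o R) (x d : o → R) (t : R) (i : ι) :
    (A *ᵥ (x + t • d)) i = A i ⬝ᵥ x + t * (A i ⬝ᵥ d) := by
  simp [mulVec_apply, row_apply']

theorem Matrix.convex_setOf_mulVec_le {ι o : Type*} [Fintype o] (A : Matrix ι o ℝ) (b : ι → ℝ) :
    Convex ℝ {x | A *ᵥ x ≤ b} :=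
  (convex_Iic b).linear_preimage A.mulVecLin

theorem exists_finset_subset_card_eq_linearIndepOn {ι K V : Type*} [Finite ι] [DivisionRing K]
    [AddCommGroup V] [Module K V] (v : ι → V) (t : Set ι) {k : ℕ}
    (hk : k ≤ finrank K (span K (v '' t))) :
    ∃ s : Finset ι, ↑s ⊆ t ∧ s.card = k ∧ LinearIndepOn K v s := by
  obtain ⟨u, hut, -, hspan, hu⟩ :=
    exists_linearIndepOn_extension (linearIndepOn_empty K v) (Set.empty_subset t)
  obtain ⟨u, rfl⟩ := u.toFinite.exists_finset_coe
  have hcard : finrank K (span K (v '' t)) = u.card := by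
    rw [← span_eq_of_le _ (subset_span.trans (span_mono (Set.image_mono hut))) (span_le.2 hspan),
      Set.image_eq_range, finrank_span_eq_card hu]
    simp
  obtain ⟨s, hsu, rfl⟩ := Finset.exists_subset_card_eq (hk.trans hcard.le)
  exact ⟨s, (Finset.coe_subset.2 hsu).trans hut, rfl, hu.mono (Finset.coe_subset.2 hsu)⟩

theorem sub_mem_span_singleton_of_mem_segment {K E : Type*} [Ring K] [PartialOrder K]
    [AddRightMono K] [AddCommGroup E] [Module K E] {x y z : E}
    (hy : y ∈ segment K x z) : y - x ∈ K ∙ (z - x) := by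
  rw [segment_eq_image'] at hy
  obtain ⟨θ, -, rfl⟩ := hy
  simpa using smul_mem _ θ (mem_span_singleton_self (z - x))

section Polyhedron

variable {m n : ℕ} (A : Matrix (Fin m) (Fin n) ℝ) (b : Fin m → ℝ)

def maximizerSet (c : Fin n → ℝ) : Set (Fin n → ℝ) :=
  {x | A *ᵥ x ≤ b ∧ ∀ y, A *ᵥ y ≤ b → c ⬝ᵥ y ≤ c ⬝ᵥ x}

def activeSet (x : Fin n → ℝ) : Set (Fin m) :=
  {i | A i ⬝ᵥ x = b i}

def rowsKer (s : Set (Fin m)) : Submodule ℝ (Fin n → ℝ) :=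
  LinearMap.ker (A.submatrix ((↑) : s → Fin m) id).mulVecLin

variable {A b}

theorem mem_rowsKer {s : Set (Fin m)} {v : Fin n → ℝ} :
    v ∈ rowsKer A s ↔ ∀ i ∈ s, A i ⬝ᵥ v = 0 := by
  simp [rowsKer, funext_iff, mulVec]

variable (A) in
theorem finrank_span_image_add_finrank_rowsKer (s : Set (Fin m)) :
    finrank ℝ (span ℝ (A.row '' s)) + finrank ℝ (rowsKer A s) = n := by
  rw [Set.image_eq_range]
  exact (A.submatrix ((↑) : s → Fin m) id).finrank_span_range_add_finrank_ker.trans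
    (Fintype.card_fin n)

theorem activeRank_eq_finrank_span_image (x : Fin n → ℝ) :
    activeRank A b x = finrank ℝ (span ℝ (A.row '' activeSet A b x)) := by
  have hrows : {r | ∃ i, A i ⬝ᵥ x = b i ∧ r = A i} = A.row '' activeSet A b x := by
    ext r
    exact exists_congr fun i => and_congr_right' eq_comm
  rw [activeRank, hrows]

theorem IsVertex.rowsKer_activeSet_eq_bot {x : Fin n → ℝ} (hx : IsVertex A b x) :
    rowsKer A (activeSet A b x) = ⊥ := by
  have h := finrank_span_image_add_finrank_rowsKer A (activeSet A b x)
  have hrank : finrank ℝ (span ℝ (A.row '' activeSet A b x)) = n := by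
    rw [← activeRank_eq_finrank_span_image, hx.2]
  exact Submodule.finrank_eq_zero.1 (by omega)

theorem IsVertex.nonneg_of_mulVec_add_smul_le {x d : Fin n → ℝ} {t : ℝ} (hx : IsVertex A b x)
    (hd : d ≠ 0) (hxd : A *ᵥ (x + d) ≤ b) (hxtd : A *ᵥ (x + t • d) ≤ b) : 0 ≤ t := by
  have hdker : d ∉ rowsKer A (activeSet A b x) := by
    rwa [hx.rowsKer_activeSet_eq_bot, Submodule.mem_bot]
  obtain ⟨i, hi, hid⟩ : ∃ i, A i ⬝ᵥ x = b i ∧ A i ⬝ᵥ d ≠ 0 := by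
    simpa [mem_rowsKer, activeSet] using hdker
  have h1 := hxd i
  have h2 := hxtd i
  rw [← one_smul ℝ d, mulVec_add_smul_apply] at h1
  rw [mulVec_add_smul_apply] at h2
  have hneg : A i ⬝ᵥ d < 0 := lt_of_le_of_ne (by linarith) hid
  exact nonneg_of_mul_nonpos_left (by linarith) hneg

theorem maximizerSet_sum_rows_eq {S : Finset (Fin m)} {x₀ : Fin n → ℝ} (hx₀ : A *ᵥ x₀ ≤ b)
    (hS : ∀ i ∈ S, A i ⬝ᵥ x₀ = b i) :
    maximizerSet A b (∑ i ∈ S, A.row i) = {x | A *ᵥ x ≤ b ∧ ∀ i ∈ S, A i ⬝ᵥ x = b i} := by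
  have hbound : ∀ y, A *ᵥ y ≤ b → (∑ i ∈ S, A.row i) ⬝ᵥ y ≤ ∑ i ∈ S, b i := fun y hy => by
    rw [sum_dotProduct]
    exact Finset.sum_le_sum fun i _ => hy i
  ext x
  refine ⟨fun ⟨hx, hmax⟩ => ⟨hx, ?_⟩, fun ⟨hx, hact⟩ => ⟨hx, fun y hy => ?_⟩⟩
  · refine (Finset.sum_eq_sum_iff_of_le fun i _ => hx i).1 (le_antisymm ?_ ?_)
    · exact (sum_dotProduct _ _ _).symm.trans_le (hbound x hx)
    · calc ∑ i ∈ S, b i = (∑ i ∈ S, A.row i) ⬝ᵥ x₀ := by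
            rw [sum_dotProduct]; exact (Finset.sum_congr rfl hS).symm
        _ ≤ (∑ i ∈ S, A.row i) ⬝ᵥ x := hmax x₀ hx₀
        _ = ∑ i ∈ S, A.row i ⬝ᵥ x := sum_dotProduct _ _ _
  · calc (∑ i ∈ S, A.row i) ⬝ᵥ y ≤ ∑ i ∈ S, b i := hbound y hy
      _ = (∑ i ∈ S, A.row i) ⬝ᵥ x := by
          rw [sum_dotProduct]; exact (Finset.sum_congr rfl hact).symm

theorem rowsKer_eq_span_singleton {S : Finset (Fin m)} (hcard : S.card = n - 1)
    (hli : LinearIndependent ℝ (fun i : S => A i.1)) {d : Fin n → ℝ} (hd : d ≠ 0)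
    (hdS : d ∈ rowsKer A S) : rowsKer A S = ℝ ∙ d := by
  have hrank : finrank ℝ (span ℝ (A.row '' S)) = n - 1 := by
    rw [Set.image_eq_range, ← hcard]
    exact (finrank_span_eq_card hli).trans (Fintype.card_coe S)
  have hn : n ≠ 0 := by
    rintro rfl
    exact hd (Subsingleton.elim _ _)
  refine (eq_of_le_of_finrank_le ((span_singleton_le_iff_mem _ _).2 hdS) ?_).symm
  have := finrank_span_image_add_finrank_rowsKer A S
  rw [finrank_span_singleton hd]
  omega

theorem maximizerSet_sum_rows_eq_segment {x₁ x₂ : Fin n → ℝ} (hne : x₁ ≠ x₂)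
    (h₁ : IsVertex A b x₁) (h₂ : IsVertex A b x₂) {S : Finset (Fin m)}
    (hcard : S.card = n - 1) (hli : LinearIndependent ℝ (fun i : S => A i.1))
    (hS : ∀ i ∈ S, A i ⬝ᵥ x₁ = b i ∧ A i ⬝ᵥ x₂ = b i) :
    maximizerSet A b (∑ i ∈ S, A.row i) = segment ℝ x₁ x₂ := by
  set d := x₂ - x₁
  have hd : d ≠ 0 := sub_ne_zero.2 hne.symm
  have hker : rowsKer A S = ℝ ∙ d := rowsKer_eq_span_singleton hcard hli hd <|
    mem_rowsKer.2 fun i hi => by rw [dotProduct_sub, (hS i hi).1, (hS i hi).2, sub_self]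
  rw [maximizerSet_sum_rows_eq h₁.1 fun i hi => (hS i hi).1, segment_eq_image']
  ext x
  constructor
  · rintro ⟨hx, hact⟩
    have hxker : x - x₁ ∈ rowsKer A S := mem_rowsKer.2 fun i hi => by
      rw [dotProduct_sub, hact i hi, (hS i hi).1, sub_self]
    obtain ⟨t, ht⟩ := mem_span_singleton.1 (hker ▸ hxker)
    have hx_eq : x = x₁ + t • d := by rw [ht]; abel
    refine ⟨t, ⟨?_, ?_⟩, hx_eq.symm⟩
    · exact h₁.nonneg_of_mulVec_add_smul_le hd (by simpa [d] using h₂.1) (hx_eq ▸ hx)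
    · have h := h₂.nonneg_of_mulVec_add_smul_le (neg_ne_zero.2 hd) (t := 1 - t)
        (by simpa [d] using h₁.1) (by convert hx using 2; rw [hx_eq]; module)
      linarith
  · rintro ⟨t, ht, rfl⟩
    refine ⟨(A.convex_setOf_mulVec_le b).segment_subset h₁.1 h₂.1 ?_, fun i hi => ?_⟩
    · rw [segment_eq_image']
      exact ⟨t, ht, rfl⟩
    · rw [dotProduct_add, dotProduct_smul, dotProduct_sub, (hS i hi).1, (hS i hi).2]
      simp

theorem eventually_mulVec_add_smul_le {x v : Fin n → ℝ} (hx : A *ᵥ x ≤ b)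
    (hv : v ∈ rowsKer A (activeSet A b x)) : ∀ᶠ t in 𝓝 (0 : ℝ), A *ᵥ (x + t • v) ≤ b := by
  simp only [Pi.le_def, mulVec_add_smul_apply]
  refine eventually_all.2 fun i => ?_
  by_cases hi : A i ⬝ᵥ x = b i
  · refine Eventually.of_forall fun t => ?_
    rw [mem_rowsKer.1 hv i hi, hi, mul_zero, add_zero]
  · have hcont : Continuous fun t : ℝ => A i ⬝ᵥ x + t * (A i ⬝ᵥ v) := by fun_prop
    refine (hcont.continuousAt.eventually_lt continuousAt_const ?_).mono fun t => le_of_lt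
    simpa [mulVec_apply, row_apply'] using lt_of_le_of_ne (hx i) hi

theorem eventually_add_smul_mem_maximizerSet {c x v : Fin n → ℝ} (hx : x ∈ maximizerSet A b c)
    (hv : v ∈ rowsKer A (activeSet A b x)) :
    ∀ᶠ t in 𝓝 (0 : ℝ), x + t • v ∈ maximizerSet A b c := by
  have hP := eventually_mulVec_add_smul_le hx.1 hv
  have hcv : c ⬝ᵥ v = 0 := by
    have hmax : IsLocalMax (fun t : ℝ => c ⬝ᵥ x + t * (c ⬝ᵥ v)) 0 := hP.mono fun t ht => by
      simpa [dotProduct_add, dotProduct_smul] using hx.2 _ ht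
    simpa using hmax.hasDerivAt_eq_zero (((hasDerivAt_id 0).mul_const _).const_add _)
  refine hP.mono fun t ht => ⟨ht, fun y hy => ?_⟩
  simpa [dotProduct_add, dotProduct_smul, hcv] using hx.2 y hy

theorem adjacentVertices_of_maximizerSet_eq_segment {c x₁ x₂ : Fin n → ℝ} (hne : x₁ ≠ x₂)
    (hc : maximizerSet A b c = segment ℝ x₁ x₂) : AdjacentVertices A b x₁ x₂ := by
  set x₀ := midpoint ℝ x₁ x₂
  have hx₀ : x₀ ∈ maximizerSet A b c := hc ▸ midpoint_mem_segment x₁ x₂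
  have hx₁ : A *ᵥ x₁ ≤ b := (hc ▸ left_mem_segment ℝ x₁ x₂ : x₁ ∈ maximizerSet A b c).1
  have hx₂ : A *ᵥ x₂ ≤ b := (hc ▸ right_mem_segment ℝ x₁ x₂ : x₂ ∈ maximizerSet A b c).1
  have hactive : ∀ i ∈ activeSet A b x₀, A i ⬝ᵥ x₁ = b i ∧ A i ⬝ᵥ x₂ = b i := by
    intro i hi
    have h₁ := hx₁ i
    have h₂ := hx₂ i
    simp only [activeSet, Set.mem_ofPred_eq, x₀, midpoint_eq_smul_add, dotProduct_smul,
      dotProduct_add, smul_eq_mul, invOf_eq_inv] at hi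
    rw [mulVec_apply, row_apply'] at h₁ h₂
    constructor <;> linarith
  have hker : rowsKer A (activeSet A b x₀) ≤ ℝ ∙ (x₂ - x₁) := by
    intro v hv
    obtain ⟨t, hmem, ht⟩ := ((eventually_add_smul_mem_maximizerSet hx₀ hv).filter_mono
      nhdsWithin_le_nhds |>.and self_mem_nhdsWithin).exists (f := 𝓝[≠] (0 : ℝ))
    rw [hc] at hmem
    have htv : t • v = (x₀ + t • v - x₁) - (x₀ - x₁) := by abel
    rw [← smul_mem_iff _ ht, htv]
    exact sub_mem (sub_mem_span_singleton_of_mem_segment hmem)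
      (sub_mem_span_singleton_of_mem_segment (midpoint_mem_segment x₁ x₂))
  have hrank : n - 1 ≤ finrank ℝ (span ℝ (A.row '' activeSet A b x₀)) := by
    have := finrank_span_image_add_finrank_rowsKer A (activeSet A b x₀)
    have := (finrank_mono hker).trans (finrank_span_singleton (sub_ne_zero.2 hne.symm)).le
    omega
  obtain ⟨S, hST, hcard, hli⟩ := exists_finset_subset_card_eq_linearIndepOn A.row _ hrank
  exact ⟨S, hcard, hli, fun i hi => hactive i (hST hi)⟩

end Polyhedron

/-- Two distinct vertices `x₁ ≠ x₂` of `P = {x | Ax ≤ b}` are adjacent iff there is a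
`c` such that the set of maximizers of `cᵀx` over `P` is exactly the segment `[x₁, x₂]`. -/
theorem adjacent_iff_segment_of_maximizers {m n : ℕ}
    (A : Matrix (Fin m) (Fin n) ℝ) (b : Fin m → ℝ)
    (x₁ x₂ : Fin n → ℝ) (hne : x₁ ≠ x₂)
    (h₁ : IsVertex A b x₁) (h₂ : IsVertex A b x₂) :
    AdjacentVertices A b x₁ x₂ ↔
      ∃ c : Fin n → ℝ,
        {x : Fin n → ℝ | A.mulVec x ≤ b ∧
            ∀ y : Fin n → ℝ, A.mulVec y ≤ b → c ⬝ᵥ y ≤ c ⬝ᵥ x} =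
          segment ℝ x₁ x₂ := by
  constructor
  · rintro ⟨S, hcard, hli, hS⟩
    exact ⟨_, maximizerSet_sum_rows_eq_segment hne h₁ h₂ hcard hli hS⟩
  · rintro ⟨c, hc⟩
    exact adjacentVertices_of_maximizerSet_eq_segment hne hc
end

section
/- Suppose the linear program max{c^T x : x ∈ ℝ^n, A x ≤ b} is non-degenerate and B is a feasible but not optimal basis. Then x* = A_B^{-1} b_B is not an optimal solution: there exists a feasible y ∈ P with c^T y > c^T x*. -/
open Matrix Filter Topology

/-!
Non-degeneracy forces the constraints active at `x*` to be exactly the basis rows. Writing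
`c = λ_B A_B` and picking a basis row `β k` with `λ_{β k} < 0`, the direction `d = -A_B⁻¹ e_k`
keeps every active constraint (it loosens row `β k` and fixes the others) and raises the objective
by `c ⬝ d = -λ_{β k} > 0`; since all other constraints are slack at `x*`, a small step along `d`
stays in `P`.
-/

section

variable {ι κ : Type*} [Fintype κ]

theorem eventually_mulVec_add_smul_le_s3 [Finite ι] {A : Matrix ι κ ℝ} {b : ι → ℝ} {x d : κ → ℝ}
    (hx : A *ᵥ x ≤ b) (hd : ∀ r, A r ⬝ᵥ x = b r → A r ⬝ᵥ d ≤ 0) :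
    ∀ᶠ t in 𝓝[>] (0 : ℝ), A *ᵥ (x + t • d) ≤ b := by
  simp only [Pi.le_def, eventually_all]
  intro r
  have hrow : ∀ t : ℝ, (A *ᵥ (x + t • d)) r = A r ⬝ᵥ x + t * A r ⬝ᵥ d := fun t => by
    simp [mulVec]
  simp only [hrow]
  rcases (show A r ⬝ᵥ x ≤ b r from hx r).eq_or_lt with hactive | hslack
  · filter_upwards [self_mem_nhdsWithin] with t (ht : 0 < t)
    nlinarith [hd r hactive]
  · have hlim : Tendsto (fun t : ℝ => A r ⬝ᵥ x + t * A r ⬝ᵥ d) (𝓝[>] 0) (𝓝 (A r ⬝ᵥ x)) :=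
      ((Continuous.tendsto' (by fun_prop) 0 _ (by simp)).mono_left nhdsWithin_le_nhds)
    exact (hlim.eventually_lt_const hslack).mono fun _ => le_of_lt

variable {R : Type*}

theorem setOf_dotProduct_eq_eq_range [Finite ι] [NonUnitalNonAssocSemiring R] {A : Matrix ι κ R}
    {b : ι → R} {x : κ → R} {β : κ → ι} (hβ : Function.Injective β)
    (hbasis : ∀ j, A (β j) ⬝ᵥ x = b (β j))
    (hnondeg : {r | A r ⬝ᵥ x = b r}.ncard ≤ Fintype.card κ) :
    {r | A r ⬝ᵥ x = b r} = Set.range β := by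
  refine (Set.eq_of_subset_of_ncard_le ?_ ?_ (Set.toFinite _)).symm
  · rintro _ ⟨j, rfl⟩
    exact hbasis j
  · rwa [← Set.image_univ, Set.ncard_image_of_injective _ hβ, Set.ncard_univ,
      Nat.card_eq_fintype_card]

theorem vecMul_eq_vecMul_submatrix [Fintype ι] [NonUnitalNonAssocSemiring R] {A : Matrix ι κ R}
    {β : κ → ι} (hβ : Function.Injective β) {lam : ι → R} (hlam : ∀ r ∉ Set.range β, lam r = 0) :
    lam ᵥ* A = (lam ∘ β) ᵥ* A.submatrix β id := by
  ext j
  exact (Fintype.sum_of_injective β hβ _ _ (fun r hr => by simp [hlam r hr]) fun _ => rfl).symm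

theorem submatrix_mulVec_nonsing_inv_mulVec [CommRing R] [DecidableEq κ] {A : Matrix ι κ R}
    {β : κ → ι} (hinv : IsUnit (A.submatrix β id).det) (v : κ → R) :
    A.submatrix β id *ᵥ ((A.submatrix β id)⁻¹ *ᵥ v) = v := by
  rw [mulVec_mulVec, mul_nonsing_inv _ hinv, one_mulVec]

end

/-- If the LP `max {cᵀx : Ax ≤ b}` is non-degenerate (no point has more than `n`
active constraints) and `B` is a feasible but not optimal basis, then
`x* = A_B⁻¹ b_B` is not an optimal solution: some feasible `y` has a strictly
larger objective value. -/
theorem feasible_not_optimal_basis_not_optimal_solution {m n : ℕ}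
    (A : Matrix (Fin m) (Fin n) ℝ) (b : Fin m → ℝ) (c : Fin n → ℝ)
    (hnondeg : ∀ x : Fin n → ℝ, ({i : Fin m | A i ⬝ᵥ x = b i}).ncard ≤ n)
    (β : Fin n → Fin m) (hβ : Function.Injective β)
    (hinv : IsUnit (A.submatrix β id).det)
    (xstar : Fin n → ℝ)
    (hxstar : xstar = (A.submatrix β id)⁻¹.mulVec (b ∘ β))
    (hfeasB : A.mulVec xstar ≤ b)
    (hnotopt : ∃ lam : Fin m → ℝ,
      lam ᵥ* A = c ∧ (∀ i : Fin m, i ∉ Set.range β → lam i = 0) ∧ ∃ i : Fin m, lam i < 0) :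
    ∃ y : Fin n → ℝ, A.mulVec y ≤ b ∧ c ⬝ᵥ xstar < c ⬝ᵥ y := by
  obtain ⟨lam, rfl, hlam, i, hneg⟩ := hnotopt
  obtain ⟨k, rfl⟩ : i ∈ Set.range β := by
    by_contra hi
    exact hneg.ne (hlam i hi)
  set d := (A.submatrix β id)⁻¹ *ᵥ -Pi.single k 1
  have hbasis (j : Fin n) : A (β j) ⬝ᵥ xstar = b (β j) :=
    congrFun (hxstar ▸ submatrix_mulVec_nonsing_inv_mulVec hinv (b ∘ β)) j
  have hactive := setOf_dotProduct_eq_eq_range hβ hbasis (by simpa using hnondeg xstar)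
  have hdir (r : Fin m) (hr : A r ⬝ᵥ xstar = b r) : A r ⬝ᵥ d ≤ 0 := by
    obtain ⟨j, rfl⟩ : r ∈ Set.range β := hactive ▸ hr
    have := congrFun (submatrix_mulVec_nonsing_inv_mulVec hinv (-Pi.single k (1 : ℝ))) j
    change A (β j) ⬝ᵥ d = _ at this
    rw [this, Pi.neg_apply, neg_nonpos]
    exact (Pi.single_nonneg (i := k) (α := fun _ => ℝ)).mpr zero_le_one j
  have hascent : 0 < lam ᵥ* A ⬝ᵥ d := by
    rw [vecMul_eq_vecMul_submatrix hβ hlam, ← dotProduct_mulVec,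
      submatrix_mulVec_nonsing_inv_mulVec hinv]
    simpa using hneg
  obtain ⟨t, hfeas, ht⟩ :=
    ((eventually_mulVec_add_smul_le_s3 hfeasB hdir).and self_mem_nhdsWithin).exists
  refine ⟨xstar + t • d, hfeas, ?_⟩
  rw [dotProduct_add, dotProduct_smul, smul_eq_mul]
  exact lt_add_of_pos_right _ (mul_pos ht hascent)
end

section
/- (Strong Duality) Consider the linear program max{c^T x : x ∈ ℝ^n, A x ≤ b, x ≥ 0} and its dual min{b^T y : y ∈ ℝ^m, A^T y ≥ c, y ≥ 0}. If the primal is feasible and bounded (there exist feasible points and an M ∈ ℝ with c^T x ≤ M for all primal-feasible x), then there exist a primal feasible x* and a dual feasible y* with c^T x* = b^T y*. -/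
/-!
Farkas' lemma, proved by Fourier–Motzkin elimination, is applied to the system
`Ax ≤ b, x ≥ 0, Aᵀy ≥ c, y ≥ 0, bᵀy ≤ cᵀx`; by weak duality any solution is an optimal pair.
Otherwise Farkas gives `u, v, α ≥ 0` with `Av ≤ αb`, `Aᵀu ≥ αc` and `bᵀu < cᵀv`. For `α > 0`
this contradicts weak duality for `v / α` and `u / α`; for `α = 0`, `v` is a recession direction
of the primal feasible region with `cᵀv > bᵀu ≥ 0`, contradicting boundedness.
-/

open Matrix

theorem exists_forall_le_le_of_forall_le {κ α : Type*} [Finite κ] [LinearOrder α] [Nonempty α]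
    {p q : κ → Prop} (f : κ → α) (h : ∀ i j, p i → q j → f i ≤ f j) :
    ∃ t, (∀ i, p i → f i ≤ t) ∧ ∀ j, q j → t ≤ f j := by
  by_cases hp : Nonempty {i // p i}
  · obtain ⟨⟨i₀, hi₀⟩, hmax⟩ := Finite.exists_max fun i : {i // p i} => f i
    exact ⟨f i₀, fun i hi => hmax ⟨i, hi⟩, fun j hj => h i₀ j hi₀ hj⟩
  · obtain ⟨t, ht⟩ := (Set.finite_range f).bddBelow
    exact ⟨t, fun i hi => (hp ⟨⟨i, hi⟩⟩).elim, fun j _ => ht ⟨j, rfl⟩⟩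

namespace FourierMotzkin

variable {ι : Type*} [DecidableEq ι]

/-- Row `(i, j)` is the nonnegative combination of rows `i` and `j` that cancels the
coefficient `a`; rows with `a i = 0` are kept as the rows `(i, i)`. -/
noncomputable def elimMatrix (a : ι → ℝ) : Matrix (ι × ι) ι ℝ := fun p =>
  if 0 < a p.1 ∧ a p.2 < 0 then Pi.single p.1 (-a p.2) + Pi.single p.2 (a p.1)
  else if p.1 = p.2 ∧ a p.1 = 0 then Pi.single p.1 1 else 0

variable (a : ι → ℝ)

theorem elimMatrix_nonneg (p : ι × ι) (l : ι) : 0 ≤ elimMatrix a p l := by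
  unfold elimMatrix
  split_ifs with h₁ h₂
  · simp only [Pi.add_apply, Pi.single_apply]
    split_ifs <;> linarith [h₁.1, h₁.2]
  · simp only [Pi.single_apply]
    split_ifs <;> norm_num
  · exact le_rfl

variable [Fintype ι]

theorem elimMatrix_mulVec_apply (v : ι → ℝ) (p : ι × ι) :
    (elimMatrix a *ᵥ v) p =
      if 0 < a p.1 ∧ a p.2 < 0 then -a p.2 * v p.1 + a p.1 * v p.2
      else if p.1 = p.2 ∧ a p.1 = 0 then v p.1 else 0 := by
  change elimMatrix a p ⬝ᵥ v = _
  unfold elimMatrix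
  split_ifs <;> simp [add_dotProduct, single_dotProduct]

theorem elimMatrix_mulVec_self : elimMatrix a *ᵥ a = 0 := by
  ext p
  rw [elimMatrix_mulVec_apply, Pi.zero_apply]
  split_ifs with h₁ h₂
  · ring
  · exact h₂.2
  · rfl

theorem exists_mul_le_of_elimMatrix_mulVec_nonneg {g : ι → ℝ} (hg : 0 ≤ elimMatrix a *ᵥ g) :
    ∃ t, ∀ i, a i * t ≤ g i := by
  have hpair : ∀ j i, a j < 0 → 0 < a i → g j / a j ≤ g i / a i := by
    intro j i hj hi
    have := hg (i, j)
    rw [Pi.zero_apply, elimMatrix_mulVec_apply, if_pos ⟨hi, hj⟩] at this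
    rw [div_le_iff_of_neg hj, div_mul_eq_mul_div, div_le_iff₀ hi]
    linarith
  obtain ⟨t, hlow, hupp⟩ := exists_forall_le_le_of_forall_le (fun i => g i / a i) hpair
  refine ⟨t, fun i => ?_⟩
  rcases lt_trichotomy (a i) 0 with hi | hi | hi
  · rw [mul_comm, ← div_le_iff_of_neg hi]; exact hlow i hi
  · have := hg (i, i)
    rw [Pi.zero_apply, elimMatrix_mulVec_apply, if_neg (fun h => h.1.not_gt h.2),
      if_pos ⟨rfl, hi⟩] at this
    simpa [hi] using this
  · rw [mul_comm, ← le_div_iff₀ hi]; exact hupp i hi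

theorem exists_mulVec_le_of_elimMatrix {n : ℕ} (A : Matrix ι (Fin (n + 1)) ℝ) (b : ι → ℝ)
    {x' : Fin n → ℝ}
    (hx' : (elimMatrix (Aᵀ 0) * A.submatrix id Fin.succ) *ᵥ x' ≤ elimMatrix (Aᵀ 0) *ᵥ b) :
    ∃ x, A *ᵥ x ≤ b := by
  have hg : 0 ≤ elimMatrix (Aᵀ 0) *ᵥ (b - A.submatrix id Fin.succ *ᵥ x') := by
    rwa [mulVec_sub, mulVec_mulVec, sub_nonneg]
  obtain ⟨t, ht⟩ := exists_mul_le_of_elimMatrix_mulVec_nonneg _ hg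
  refine ⟨Fin.cons t x', fun i => ?_⟩
  have hrow : (A *ᵥ Fin.cons t x') i = A i 0 * t + (A.submatrix id Fin.succ *ᵥ x') i := by
    simp [mulVec, dotProduct, Fin.sum_univ_succ]
  have := ht i
  simp only [transpose_apply, Pi.sub_apply] at this
  linarith

end FourierMotzkin

open FourierMotzkin in
theorem farkas_fin {n : ℕ} {ι : Type*} [Fintype ι] (A : Matrix ι (Fin n) ℝ)
    (b : ι → ℝ) (h : ¬ ∃ x, A *ᵥ x ≤ b) : ∃ y, 0 ≤ y ∧ y ᵥ* A = 0 ∧ b ⬝ᵥ y < 0 := by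
  classical
  induction n generalizing ι with
  | zero =>
    obtain ⟨i, hi⟩ : ∃ i, b i < 0 := by
      by_contra! hb
      exact h ⟨0, by rw [mulVec_zero]; exact hb⟩
    exact ⟨Pi.single i 1, Pi.single_nonneg.2 zero_le_one, Subsingleton.elim _ _,
      by simpa [dotProduct_single]⟩
  | succ n ih =>
    set E := elimMatrix (Aᵀ 0)
    obtain ⟨y, hy, hyA, hyb⟩ := ih (E * A.submatrix id Fin.succ) (E *ᵥ b)
      fun ⟨x', hx'⟩ => h (exists_mulVec_le_of_elimMatrix A b hx')
    rw [← vecMul_vecMul] at hyA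
    have hcol₀ : (y ᵥ* E ᵥ* A) 0 = 0 := by
      change y ᵥ* E ⬝ᵥ Aᵀ 0 = 0
      rw [← dotProduct_mulVec, elimMatrix_mulVec_self, dotProduct_zero]
    refine ⟨y ᵥ* E,
      fun l => Finset.sum_nonneg fun p _ => mul_nonneg (hy p) (elimMatrix_nonneg _ p l),
      funext (Fin.cases hcol₀ (congrFun hyA)), ?_⟩
    rwa [dotProduct_comm, ← dotProduct_mulVec, dotProduct_comm]

theorem farkas {ι κ : Type*} [Fintype ι] [Fintype κ] (A : Matrix ι κ ℝ) (b : ι → ℝ)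
    (h : ¬ ∃ x, A *ᵥ x ≤ b) : ∃ y, 0 ≤ y ∧ y ᵥ* A = 0 ∧ b ⬝ᵥ y < 0 := by
  let e := Fintype.equivFin κ
  obtain ⟨y, hy, hyA, hyb⟩ := farkas_fin (A.submatrix id e.symm) b fun ⟨x, hx⟩ =>
    h ⟨x ∘ e, by rwa [submatrix_mulVec_equiv, Equiv.symm_symm] at hx⟩
  have hyA' : (y ᵥ* A) ∘ e.symm = 0 := hyA
  exact ⟨y, hy, funext fun k => by simpa using congrFun hyA' (e k), hyb⟩

theorem farkas_nonneg {ι κ : Type*} [Fintype ι] [Fintype κ] (A : Matrix ι κ ℝ) (b : ι → ℝ)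
    (h : ¬ ∃ x, A *ᵥ x ≤ b ∧ 0 ≤ x) : ∃ y, 0 ≤ y ∧ 0 ≤ y ᵥ* A ∧ b ⬝ᵥ y < 0 := by
  classical
  obtain ⟨w, hw, hwA, hwb⟩ := farkas (A.fromRows (-1)) (b ⊕ᵥ 0) <| by
    rintro ⟨x, hx⟩
    rw [fromRows_mulVec, Sum.elim_le_elim_iff, neg_mulVec, one_mulVec, neg_nonpos] at hx
    exact h ⟨x, hx⟩
  rw [vecMul_fromRows, vecMul_neg, vecMul_one, add_neg_eq_zero] at hwA
  rw [← Sum.elim_comp_inl_inr w, sumElim_dotProduct_sumElim, zero_dotProduct, add_zero] at hwb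
  exact ⟨w ∘ Sum.inl, fun i => hw _, hwA ▸ fun k => hw _, hwb⟩

section LinearProgram

variable {m n : Type*} [Fintype m] [Fintype n] {A : Matrix m n ℝ} {b : m → ℝ} {c : n → ℝ}

theorem weak_duality {x : n → ℝ} {y : m → ℝ} (hx : A *ᵥ x ≤ b) (hx₀ : 0 ≤ x)
    (hy : c ≤ Aᵀ *ᵥ y) (hy₀ : 0 ≤ y) : c ⬝ᵥ x ≤ b ⬝ᵥ y :=
  calc c ⬝ᵥ x ≤ Aᵀ *ᵥ y ⬝ᵥ x := dotProduct_le_dotProduct_of_nonneg_right hy hx₀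
    _ = y ⬝ᵥ A *ᵥ x := by rw [mulVec_transpose, dotProduct_mulVec]
    _ ≤ y ⬝ᵥ b := dotProduct_le_dotProduct_of_nonneg_left hx hy₀
    _ = b ⬝ᵥ y := dotProduct_comm _ _

omit [Fintype m] in
theorem dotProduct_nonpos_of_bddAbove {M : ℝ} (hbdd : ∀ x, A *ᵥ x ≤ b → 0 ≤ x → c ⬝ᵥ x ≤ M)
    {x v : n → ℝ} (hx : A *ᵥ x ≤ b) (hx₀ : 0 ≤ x) (hv : A *ᵥ v ≤ 0) (hv₀ : 0 ≤ v) :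
    c ⬝ᵥ v ≤ 0 := by
  by_contra! hcv
  set t := (M - c ⬝ᵥ x + 1) / c ⬝ᵥ v
  have ht : 0 ≤ t := div_nonneg (by linarith [hbdd x hx hx₀]) hcv.le
  have hray := hbdd (x + t • v)
    (by rw [mulVec_add, mulVec_smul]
        exact add_le_of_le_of_nonpos hx (smul_nonpos_of_nonneg_of_nonpos ht hv))
    (add_nonneg hx₀ (smul_nonneg ht hv₀))
  rw [dotProduct_add, dotProduct_smul, smul_eq_mul, div_mul_cancel₀ _ hcv.ne'] at hray
  linarith

theorem weak_duality_homogenized {M : ℝ} (hfeas : ∃ x, A *ᵥ x ≤ b ∧ 0 ≤ x)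
    (hbdd : ∀ x, A *ᵥ x ≤ b → 0 ≤ x → c ⬝ᵥ x ≤ M) {u : m → ℝ} {v : n → ℝ} {α : ℝ}
    (hu : 0 ≤ u) (hv : 0 ≤ v) (hα : 0 ≤ α) (hAv : A *ᵥ v ≤ α • b) (hAu : α • c ≤ Aᵀ *ᵥ u) :
    c ⬝ᵥ v ≤ b ⬝ᵥ u := by
  obtain ⟨x, hx, hx₀⟩ := hfeas
  rcases hα.eq_or_lt with rfl | hα
  · rw [zero_smul] at hAv hAu
    calc c ⬝ᵥ v ≤ 0 := dotProduct_nonpos_of_bddAbove hbdd hx hx₀ hAv hv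
      _ = 0 ⬝ᵥ x := (zero_dotProduct x).symm
      _ ≤ b ⬝ᵥ u := weak_duality hx hx₀ hAu hu
  · have := weak_duality hAv hv hAu hu
    rw [smul_dotProduct, smul_dotProduct, smul_eq_mul, smul_eq_mul] at this
    exact le_of_mul_le_mul_left this hα

variable (A b c)

def optimalityMatrix : Matrix ((m ⊕ n) ⊕ Unit) (n ⊕ m) ℝ :=
  (fromBlocks A 0 0 (-Aᵀ)).fromRows (of fun _ => (-c) ⊕ᵥ b)

theorem optimalityMatrix_mulVec_le_iff (x : n → ℝ) (y : m → ℝ) :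
    optimalityMatrix A b c *ᵥ (x ⊕ᵥ y) ≤ (b ⊕ᵥ -c) ⊕ᵥ 0 ↔
      A *ᵥ x ≤ b ∧ c ≤ Aᵀ *ᵥ y ∧ b ⬝ᵥ y ≤ c ⬝ᵥ x := by
  have hobj : (of fun _ : Unit => (-c) ⊕ᵥ b) *ᵥ (x ⊕ᵥ y) ≤ 0 ↔ b ⬝ᵥ y ≤ c ⬝ᵥ x := by
    change (∀ _ : Unit, (-c ⊕ᵥ b) ⬝ᵥ (x ⊕ᵥ y) ≤ 0) ↔ _
    rw [forall_const, sumElim_dotProduct_sumElim, neg_dotProduct, neg_add_nonpos_iff]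
  rw [optimalityMatrix, fromRows_mulVec, fromBlocks_mulVec, Sum.elim_le_elim_iff,
    Sum.elim_le_elim_iff, hobj]
  simp only [Sum.elim_comp_inl, Sum.elim_comp_inr, zero_mulVec, add_zero, zero_add, neg_mulVec,
    neg_le_neg_iff, and_assoc]

theorem vecMul_optimalityMatrix (u : m → ℝ) (v : n → ℝ) (α : ℝ) :
    ((u ⊕ᵥ v) ⊕ᵥ fun _ => α) ᵥ* optimalityMatrix A b c =
      (u ᵥ* A - α • c) ⊕ᵥ (α • b - A *ᵥ v) := by
  have hobj : (fun _ : Unit => α) ᵥ* (of fun _ => (-c) ⊕ᵥ b) = α • ((-c) ⊕ᵥ b) := by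
    ext; simp [vecMul, dotProduct]
  rw [optimalityMatrix, vecMul_fromRows, vecMul_fromBlocks, Sum.elim_comp_inl, Sum.elim_comp_inr,
    Sum.elim_comp_inl, Sum.elim_comp_inr, hobj]
  ext (k | i) <;>
    simp only [vecMul_zero, vecMul_neg, vecMul_transpose, add_zero, zero_add, Pi.add_apply,
      Pi.sub_apply, Pi.neg_apply, Pi.smul_apply, Sum.elim_inl, Sum.elim_inr, smul_eq_mul] <;> ring

theorem exists_optimal_pair_or_certificate :
    (∃ x y, (A *ᵥ x ≤ b ∧ 0 ≤ x) ∧ (c ≤ Aᵀ *ᵥ y ∧ 0 ≤ y) ∧ b ⬝ᵥ y ≤ c ⬝ᵥ x) ∨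
      ∃ (u : m → ℝ) (v : n → ℝ) (α : ℝ), 0 ≤ u ∧ 0 ≤ v ∧ 0 ≤ α ∧
        A *ᵥ v ≤ α • b ∧ α • c ≤ Aᵀ *ᵥ u ∧ b ⬝ᵥ u < c ⬝ᵥ v := by
  refine or_iff_not_imp_left.2 fun h => ?_
  obtain ⟨w, hw, hwM, hwd⟩ := farkas_nonneg (optimalityMatrix A b c) ((b ⊕ᵥ -c) ⊕ᵥ 0) <| by
    rintro ⟨z, hz, hz₀⟩
    rw [← Sum.elim_comp_inl_inr z, optimalityMatrix_mulVec_le_iff] at hz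
    exact h ⟨_, _, ⟨hz.1, fun k => hz₀ _⟩, ⟨hz.2.1, fun i => hz₀ _⟩, hz.2.2⟩
  have hw_eq :
      w = (w ∘ Sum.inl ∘ Sum.inl ⊕ᵥ w ∘ Sum.inl ∘ Sum.inr) ⊕ᵥ fun _ => w (Sum.inr ()) := by
    ext ((i | k) | ⟨⟩) <;> rfl
  rw [hw_eq, vecMul_optimalityMatrix, Sum.nonneg_elim_iff, sub_nonneg, sub_nonneg] at hwM
  rw [hw_eq, sumElim_dotProduct_sumElim, sumElim_dotProduct_sumElim, zero_dotProduct, add_zero,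
    neg_dotProduct, ← sub_eq_add_neg, sub_neg] at hwd
  exact ⟨_, _, _, fun i => hw _, fun k => hw _, hw _, hwM.2,
    by rw [mulVec_transpose]; exact hwM.1, hwd⟩

end LinearProgram

/-- Strong duality: if the primal `max {cᵀx : Ax ≤ b, x ≥ 0}` is feasible and bounded,
then there are a primal feasible `x*` and a dual feasible `y*` (for
`min {bᵀy : Aᵀy ≥ c, y ≥ 0}`) with `cᵀx* = bᵀy*`. -/
theorem lp_strong_duality {m n : ℕ}
    (A : Matrix (Fin m) (Fin n) ℝ) (b : Fin m → ℝ) (c : Fin n → ℝ)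
    (hfeas : ∃ x : Fin n → ℝ, A.mulVec x ≤ b ∧ 0 ≤ x)
    (hbdd : ∃ M : ℝ, ∀ x : Fin n → ℝ, A.mulVec x ≤ b → 0 ≤ x → c ⬝ᵥ x ≤ M) :
    ∃ (xstar : Fin n → ℝ) (ystar : Fin m → ℝ),
      (A.mulVec xstar ≤ b ∧ 0 ≤ xstar) ∧
      (c ≤ Aᵀ.mulVec ystar ∧ 0 ≤ ystar) ∧
      c ⬝ᵥ xstar = b ⬝ᵥ ystar := by
  obtain ⟨M, hM⟩ := hbdd
  rcases exists_optimal_pair_or_certificate A b c with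
    ⟨x, y, hx, hy, hyx⟩ | ⟨u, v, α, hu, hv, hα, hAv, hAu, hvu⟩
  · exact ⟨x, y, hx, hy, le_antisymm (weak_duality hx.1 hx.2 hy.1 hy.2) hyx⟩
  · exact absurd (weak_duality_homogenized hfeas hM hu hv hα hAv hAu) hvu.not_ge
end

section
/- If A ∈ ℤ^{m×n} is totally unimodular and b ∈ ℤ^m, then every vertex of the polyhedron P = {x ∈ ℝ^n : A x ≤ b} is integral, i.e., has all coordinates in ℤ. -/
open Matrix

/-- An integer matrix is totally unimodular if every square submatrix has
determinant `0`, `1` or `-1`. -/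
def IsTU {m n : ℕ} (A : Matrix (Fin m) (Fin n) ℤ) : Prop :=
  ∀ (k : ℕ) (f : Fin k → Fin m) (g : Fin k → Fin n),
    (A.submatrix f g).det = 0 ∨ (A.submatrix f g).det = 1 ∨ (A.submatrix f g).det = -1

/-!
At a vertex `x`, the active rows span `ℝⁿ`, so `n` of them are linearly independent and form an
invertible square submatrix `B` of `A` with `B x = b'` for the corresponding entries `b'` of `b`.
Total unimodularity makes `det B = ±1`, so `B⁻¹` has integer entries and `x = B⁻¹ b'` is integral.
-/

theorem exists_linearIndependent_fin_of_finrank_span_eq {K V : Type*} [DivisionRing K]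
    [AddCommGroup V] [Module K V] [FiniteDimensional K V] {S : Set V} {n : ℕ}
    (hS : Module.finrank K (Submodule.span K S) = n) :
    ∃ w : Fin n → V, (∀ i, w i ∈ S) ∧ LinearIndependent K w := by
  obtain ⟨t, htS, hspan, hli⟩ := exists_linearIndependent K S
  have : Fintype t := hli.setFinite.fintype
  have hcard : t.toFinset.card = n := by
    rw [← hS, ← hspan, finrank_span_set_eq_card hli]
  let e : Fin n ≃ t :=
    (t.toFinset.equivFinOfCardEq hcard).symm.trans (Equiv.setCongr (Set.coe_toFinset t))
  exact ⟨fun i => e i, fun i => htS (e i).2, hli.comp e e.injective⟩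

theorem IsTU.isUnit_det_submatrix {m n : ℕ} {A : Matrix (Fin m) (Fin n) ℤ} (hA : IsTU A)
    {k : ℕ} (f : Fin k → Fin m) (g : Fin k → Fin n) (hdet : (A.submatrix f g).det ≠ 0) :
    IsUnit (A.submatrix f g).det := by
  rcases hA k f g with h | h | h
  · exact absurd h hdet
  · exact h ▸ isUnit_one
  · exact h ▸ isUnit_one.neg

theorem Matrix.det_ne_zero_of_linearIndependent_map_intCast {ι K : Type*} [Fintype ι]
    [DecidableEq ι] [Field K] (B : Matrix ι ι ℤ)
    (hB : LinearIndependent K fun i => B.map (Int.cast : ℤ → K) i) : B.det ≠ 0 := by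
  have hdet : (B.map (Int.cast : ℤ → K)).det ≠ 0 :=
    ((isUnit_iff_isUnit_det _).mp (linearIndependent_rows_iff_isUnit.mp hB)).ne_zero
  have hcast : ((B.det : ℤ) : K) = (B.map (Int.cast : ℤ → K)).det :=
    RingHom.map_det (Int.castRingHom K) B
  exact fun h => hdet (by rw [← hcast, h, Int.cast_zero])

theorem Matrix.eq_intCast_mulVec_inv_of_mulVec_eq {ι R : Type*} [Fintype ι] [DecidableEq ι]
    [CommRing R] (B : Matrix ι ι ℤ) (hB : IsUnit B.det) {x : ι → R} {c : ι → ℤ}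
    (hx : B.map (Int.cast : ℤ → R) *ᵥ x = fun i => (c i : R)) :
    x = fun i => ((B⁻¹ *ᵥ c) i : R) := by
  have hinv : B⁻¹.map (Int.cast : ℤ → R) * B.map Int.cast = 1 := by
    have := congrArg (Int.castRingHom R).mapMatrix (nonsing_inv_mul B hB)
    rwa [map_mul, map_one] at this
  funext i
  calc x i = (B⁻¹.map (Int.cast : ℤ → R) *ᵥ (B.map Int.cast *ᵥ x)) i := by
        rw [mulVec_mulVec, hinv, one_mulVec]
    _ = ((B⁻¹ *ᵥ c) i : R) := by
        rw [hx]
        exact ((Int.castRingHom R).map_mulVec B⁻¹ c i).symm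

theorem tu_polyhedron_vertex_integral_general {m n : ℕ}
    (A : Matrix (Fin m) (Fin n) ℤ) (b : Fin m → ℤ) (hTU : IsTU A)
    (x : Fin n → ℝ)
    (hvert : activeRank (A.map (Int.cast : ℤ → ℝ)) (fun i => (b i : ℝ)) x = n) :
    ∀ j : Fin n, ∃ z : ℤ, x j = (z : ℝ) := by
  obtain ⟨w, hw_active, hw_li⟩ := exists_linearIndependent_fin_of_finrank_span_eq hvert
  choose f hf_active hf_row using hw_active
  have hB_rows : (fun i => (A.submatrix f id).map (Int.cast : ℤ → ℝ) i) = w :=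
    funext fun i => (hf_row i).symm
  have hB_li : LinearIndependent ℝ fun i => (A.submatrix f id).map (Int.cast : ℤ → ℝ) i :=
    hB_rows ▸ hw_li
  have hB_unit : IsUnit (A.submatrix f id).det :=
    hTU.isUnit_det_submatrix f id (det_ne_zero_of_linearIndependent_map_intCast _ hB_li)
  have hx := eq_intCast_mulVec_inv_of_mulVec_eq _ hB_unit (c := b ∘ f) (funext hf_active)
  exact fun j => ⟨_, congrFun hx j⟩

/-- If `A ∈ ℤ^{m×n}` is totally unimodular and `b ∈ ℤ^m`, then every vertex of
`P = {x ∈ ℝⁿ : Ax ≤ b}` is integral. -/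
theorem tu_polyhedron_vertex_integral {m n : ℕ}
    (A : Matrix (Fin m) (Fin n) ℤ) (b : Fin m → ℤ) (hTU : IsTU A)
    (x : Fin n → ℝ)
    (hfeas : (A.map (Int.cast : ℤ → ℝ)).mulVec x ≤ fun i => (b i : ℝ))
    (hvert : activeRank (A.map (Int.cast : ℤ → ℝ)) (fun i => (b i : ℝ)) x = n) :
    ∀ j : Fin n, ∃ z : ℤ, x j = (z : ℝ) :=
  tu_polyhedron_vertex_integral_general A b hTU x hvert
end

section
/- If A ∈ ℤ^{m×n} is totally unimodular, b ∈ ℤ^m, and max{c^T x : x ∈ ℝ^n, A x ≤ b, x ≥ 0} is feasible and bounded, then the supremum of c^T x over real feasible points equals the supremum of c^T x over integer feasible points: sup{c^T x : x ∈ ℝ^n, A x ≤ b, x ≥ 0} = sup{c^T x : x ∈ ℤ^n, A x ≤ b, x ≥ 0}. -/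
open Matrix

/-!
Adjoining the rows of `-1` to `A` turns the feasible region into a polyhedron `{x | B x ≤ β}`
with `B` still totally unimodular and `x ↦ B x` injective. In such a polyhedron, if `c ⬝ᵥ x` is
bounded above, every point can be pushed to a vertex without decreasing `c ⬝ᵥ x`: as long as the
tight rows do not have full rank, move along a direction in their kernel until one more constraint
becomes tight. At a vertex `y`, some `n` tight rows form an invertible square submatrix `S` with
`S y = β_S`; total unimodularity gives `det S = ±1`, so `y = S⁻¹ β_S` is integral. Hence the two
suprema have the same upper bounds.
-/

open Finset Function

section Polyhedron

open scoped Classical in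
noncomputable def tightSet {R ι n : Type*} [NonUnitalNonAssocSemiring R] [Fintype ι] [Fintype n]
    (B : Matrix ι n R) (β : ι → R) (x : n → R) : Finset ι :=
  {i | (B *ᵥ x) i = β i}

lemma mem_tightSet {R ι n : Type*} [NonUnitalNonAssocSemiring R] [Fintype ι] [Fintype n]
    {B : Matrix ι n R} {β : ι → R} {x : n → R} {i : ι} :
    i ∈ tightSet B β x ↔ (B *ᵥ x) i = β i := by
  simp [tightSet]

/-- When `B *ᵥ x ≤ β`, this says that `x` is a vertex of the polyhedron `{x | B *ᵥ x ≤ β}`. -/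
def IsBasicPoint {R ι n : Type*} [NonUnitalNonAssocSemiring R] [Fintype ι] [Fintype n]
    (B : Matrix ι n R) (β : ι → R) (x : n → R) : Prop :=
  ∀ d : n → R, (∀ i ∈ tightSet B β x, (B *ᵥ d) i = 0) → d = 0

lemma IsBasicPoint.injective_mulVec_submatrix {R ι n : Type*} [Ring R] [Fintype ι] [Fintype n]
    {B : Matrix ι n R} {β : ι → R} {x : n → R} (hx : IsBasicPoint B β x) :
    Injective (B.submatrix ((↑) : tightSet B β x → ι) id).mulVec := by
  intro u v huv
  rw [← sub_eq_zero]
  refine hx _ fun i hi ↦ ?_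
  rw [mulVec_sub, Pi.sub_apply, sub_eq_zero]
  exact congrFun huv ⟨i, hi⟩

variable {𝕜 ι n : Type*} [Field 𝕜] [LinearOrder 𝕜] [IsStrictOrderedRing 𝕜]
  [Fintype ι] [Fintype n] {B : Matrix ι n 𝕜} {β : ι → 𝕜} {c : n → 𝕜} {M : 𝕜}

omit [Fintype ι] in
lemma not_mulVec_nonpos_of_dotProduct_pos (hM : ∀ x, B *ᵥ x ≤ β → c ⬝ᵥ x ≤ M)
    {x d : n → 𝕜} (hx : B *ᵥ x ≤ β) (hcd : 0 < c ⬝ᵥ d) : ¬ B *ᵥ d ≤ 0 := by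
  intro hd
  set t := (M - c ⬝ᵥ x + 1) / (c ⬝ᵥ d)
  have ht : 0 ≤ t := div_nonneg (by linarith [hM x hx]) hcd.le
  have hfeas : B *ᵥ (x + t • d) ≤ β := by
    intro i
    have := mul_nonpos_of_nonneg_of_nonpos ht (hd i)
    simp only [mulVec_add, mulVec_smul, Pi.add_apply, Pi.smul_apply, smul_eq_mul]
    linarith [hx i]
  have hval : c ⬝ᵥ (x + t • d) = M + 1 := by
    rw [dotProduct_add, dotProduct_smul, smul_eq_mul, div_mul_cancel₀ _ hcd.ne']
    ring
  linarith [hM _ hfeas]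

lemma exists_ascent_of_not_isBasicPoint (hB : Injective B.mulVec)
    (hM : ∀ x, B *ᵥ x ≤ β → c ⬝ᵥ x ≤ M) {x : n → 𝕜} (hx : B *ᵥ x ≤ β)
    (hx' : ¬ IsBasicPoint B β x) :
    ∃ d, (∀ i ∈ tightSet B β x, (B *ᵥ d) i = 0) ∧ 0 ≤ c ⬝ᵥ d ∧ ¬ B *ᵥ d ≤ 0 := by
  have orth_neg {d : n → 𝕜} (hd : ∀ i ∈ tightSet B β x, (B *ᵥ d) i = 0) :
      ∀ i ∈ tightSet B β x, (B *ᵥ -d) i = 0 := by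
    simpa [mulVec_neg] using hd
  obtain ⟨d₀, hd₀, hd₀ne⟩ : ∃ d, (∀ i ∈ tightSet B β x, (B *ᵥ d) i = 0) ∧ d ≠ 0 := by
    simpa [IsBasicPoint] using hx'
  obtain ⟨d, hd, hdne, hcd⟩ : ∃ d, (∀ i ∈ tightSet B β x, (B *ᵥ d) i = 0) ∧ d ≠ 0 ∧
      0 ≤ c ⬝ᵥ d := by
    rcases le_total 0 (c ⬝ᵥ d₀) with h | h
    · exact ⟨d₀, hd₀, hd₀ne, h⟩
    · exact ⟨-d₀, orth_neg hd₀, neg_ne_zero.2 hd₀ne, by simpa using h⟩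
  by_cases hBd : B *ᵥ d ≤ 0
  swap
  · exact ⟨d, hd, hcd, hBd⟩
  -- `d` is a recession direction, so boundedness forces `c ⬝ᵥ d = 0` and `-d` works instead
  have hcd0 : c ⬝ᵥ d = 0 :=
    hcd.antisymm' (not_lt.1 fun h ↦ not_mulVec_nonpos_of_dotProduct_pos hM hx h hBd)
  refine ⟨-d, orth_neg hd, by simp [hcd0], fun hBd' ↦ hdne (hB ?_)⟩
  rw [mulVec_zero]
  exact le_antisymm hBd (by simpa [mulVec_neg] using hBd')

lemma exists_tightSet_ssubset_of_not_mulVec_nonpos {x d : n → 𝕜} (hx : B *ᵥ x ≤ β)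
    (hd : ∀ i ∈ tightSet B β x, (B *ᵥ d) i = 0) (hBd : ¬ B *ᵥ d ≤ 0) :
    ∃ t : 𝕜, 0 ≤ t ∧ B *ᵥ (x + t • d) ≤ β ∧ tightSet B β x ⊂ tightSet B β (x + t • d) := by
  classical
  let ratio (i : ι) : 𝕜 := (β i - (B *ᵥ x) i) / (B *ᵥ d) i
  have hΦ : ({i | 0 < (B *ᵥ d) i} : Finset ι).Nonempty := by
    simpa [Pi.le_def, filter_nonempty_iff] using hBd
  obtain ⟨i₀, hi₀, hmin⟩ := exists_min_image _ ratio hΦ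
  simp only [mem_filter, mem_univ, true_and] at hi₀ hmin
  have hy (t : 𝕜) (i : ι) : (B *ᵥ (x + t • d)) i = (B *ᵥ x) i + t * (B *ᵥ d) i := by
    simp [mulVec_add, mulVec_smul]
  refine ⟨ratio i₀, div_nonneg (sub_nonneg.2 (hx i₀)) hi₀.le, fun i ↦ ?_, ?_⟩
  · rw [hy]
    rcases le_or_gt ((B *ᵥ d) i) 0 with h | h
    · nlinarith [hx i, div_nonneg (sub_nonneg.2 (hx i₀)) hi₀.le]
    · have := (le_div_iff₀ h).1 (hmin i h)
      linarith
  · rw [ssubset_iff_of_subset fun i hi ↦ ?_]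
    · refine ⟨i₀, mem_tightSet.2 ?_, fun h ↦ hi₀.ne' (hd i₀ h)⟩
      rw [hy, div_mul_cancel₀ _ hi₀.ne', add_sub_cancel]
    · rw [mem_tightSet, hy, hd i hi, mul_zero, add_zero, ← mem_tightSet]
      exact hi

lemma exists_le_tightSet_ssubset (hB : Injective B.mulVec)
    (hM : ∀ x, B *ᵥ x ≤ β → c ⬝ᵥ x ≤ M) {x : n → 𝕜} (hx : B *ᵥ x ≤ β)
    (hx' : ¬ IsBasicPoint B β x) :
    ∃ y, B *ᵥ y ≤ β ∧ c ⬝ᵥ x ≤ c ⬝ᵥ y ∧ tightSet B β x ⊂ tightSet B β y := by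
  obtain ⟨d, hd, hcd, hBd⟩ := exists_ascent_of_not_isBasicPoint hB hM hx hx'
  obtain ⟨t, ht, hy, hsub⟩ := exists_tightSet_ssubset_of_not_mulVec_nonpos hx hd hBd
  refine ⟨x + t • d, hy, ?_, hsub⟩
  rw [dotProduct_add, dotProduct_smul, smul_eq_mul]
  nlinarith

theorem exists_isBasicPoint_le (hB : Injective B.mulVec)
    (hM : ∀ x, B *ᵥ x ≤ β → c ⬝ᵥ x ≤ M) {x : n → 𝕜} (hx : B *ᵥ x ≤ β) :
    ∃ y, B *ᵥ y ≤ β ∧ c ⬝ᵥ x ≤ c ⬝ᵥ y ∧ IsBasicPoint B β y := by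
  classical
  induction hk : #(tightSet B β x)ᶜ using Nat.strong_induction_on generalizing x with
  | _ k ih =>
  by_cases hbasic : IsBasicPoint B β x
  · exact ⟨x, hx, le_rfl, hbasic⟩
  obtain ⟨y, hy, hxy, hsub⟩ := exists_le_tightSet_ssubset hB hM hx hbasic
  obtain ⟨z, hz, hyz, hbz⟩ :=
    ih _ (hk ▸ card_lt_card (compl_ssubset_compl.2 hsub)) hy rfl
  exact ⟨z, hz, hxy.trans hyz, hbz⟩

end Polyhedron

section Integrality

lemma Matrix.map_intCast_mulVec {R κ n : Type*} [Ring R] [Fintype n] (A : Matrix κ n ℤ)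
    (z : n → ℤ) : A.map (Int.cast : ℤ → R) *ᵥ (fun j ↦ (z j : R)) = fun i ↦ ((A *ᵥ z) i : R) :=
  funext fun i ↦ (RingHom.map_mulVec (Int.castRingHom R) A z i).symm

variable {K κ n : Type*} [Field K] [Fintype κ] [Fintype n] [DecidableEq n]

lemma Matrix.exists_isUnit_submatrix_of_injective (B : Matrix κ n K)
    (hB : Injective B.mulVec) : ∃ f : n → κ, IsUnit (B.submatrix f id) := by
  obtain ⟨ι, a, -, hspan, hli⟩ := exists_linearIndependent' K B.row
  have := hli.finite
  have : Fintype ι := Fintype.ofFinite ι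
  have hrank : B.rank = Fintype.card n := by
    rw [Matrix.rank, LinearMap.finrank_range_of_inj hB, Module.finrank_fintype_fun_eq_card]
  have hcard : Fintype.card n = Fintype.card ι := by
    rw [← hrank, rank_eq_finrank_span_row, ← hspan,
      linearIndependent_iff_card_eq_finrank_span.1 hli]
    rfl
  let e : n ≃ ι := Fintype.equivOfCardEq hcard
  exact ⟨a ∘ e, linearIndependent_rows_iff_isUnit.1 (hli.comp e e.injective)⟩

lemma Matrix.IsTotallyUnimodular.exists_intCast_eq_of_mulVec_eq {B : Matrix κ n ℤ}
    (hB : B.IsTotallyUnimodular) (hinj : Injective (B.map (Int.cast : ℤ → K)).mulVec)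
    {β : κ → ℤ} {y : n → K} (hy : B.map (Int.cast : ℤ → K) *ᵥ y = fun i ↦ (β i : K)) :
    ∃ z : n → ℤ, (fun j ↦ (z j : K)) = y := by
  obtain ⟨f, hf⟩ := (B.map (Int.cast : ℤ → K)).exists_isUnit_submatrix_of_injective hinj
  rw [submatrix_map] at hf
  have hS : IsUnit (B.submatrix f id).det := by
    have hK := (isUnit_iff_isUnit_det _).1 hf
    rw [← Int.cast_det] at hK
    obtain ⟨s, hs⟩ := (isTotallyUnimodular_iff_fintype B).1 hB n f id
    cases s <;> simp [← hs] at hK ⊢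
  refine ⟨(B.submatrix f id)⁻¹ *ᵥ (β ∘ f), mulVec_injective_iff_isUnit.2 hf ?_⟩
  rw [map_intCast_mulVec, mulVec_mulVec, mul_nonsing_inv _ hS, one_mulVec]
  funext k
  exact (congrFun hy (f k)).symm

end Integrality

section TotallyUnimodular

variable {𝕜 κ n : Type*} [Field 𝕜] [LinearOrder 𝕜] [IsStrictOrderedRing 𝕜]
  [Fintype κ] [Fintype n] [DecidableEq n]

omit [Fintype κ] [DecidableEq n] in
lemma Matrix.map_intCast_mulVec_le_iff (B : Matrix κ n ℤ) (β : κ → ℤ) (z : n → ℤ) :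
    B.map (Int.cast : ℤ → 𝕜) *ᵥ (fun j ↦ (z j : 𝕜)) ≤ (fun i ↦ (β i : 𝕜)) ↔ B *ᵥ z ≤ β := by
  simp only [map_intCast_mulVec, Pi.le_def, Int.cast_le]

theorem Matrix.IsTotallyUnimodular.exists_int_mulVec_le_dotProduct_le {B : Matrix κ n ℤ}
    (hB : B.IsTotallyUnimodular) {β : κ → ℤ} {c : n → 𝕜} {M : 𝕜}
    (hinj : Injective (B.map (Int.cast : ℤ → 𝕜)).mulVec)
    (hM : ∀ x, B.map (Int.cast : ℤ → 𝕜) *ᵥ x ≤ (fun i ↦ (β i : 𝕜)) → c ⬝ᵥ x ≤ M)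
    {x : n → 𝕜} (hx : B.map (Int.cast : ℤ → 𝕜) *ᵥ x ≤ fun i ↦ (β i : 𝕜)) :
    ∃ z : n → ℤ, B *ᵥ z ≤ β ∧ c ⬝ᵥ x ≤ c ⬝ᵥ fun j ↦ (z j : 𝕜) := by
  obtain ⟨y, hy, hxy, hbasic⟩ := exists_isBasicPoint_le hinj hM hx
  let T := tightSet (B.map (Int.cast : ℤ → 𝕜)) (fun i ↦ (β i : 𝕜)) y
  have hT : Injective ((B.submatrix ((↑) : T → κ) id).map (Int.cast : ℤ → 𝕜)).mulVec := by
    rw [← submatrix_map]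
    exact hbasic.injective_mulVec_submatrix
  obtain ⟨z, rfl⟩ := (hB.submatrix ((↑) : T → κ) id).exists_intCast_eq_of_mulVec_eq
    (β := β ∘ (↑)) hT (funext fun i ↦ mem_tightSet.1 i.2)
  exact ⟨z, (map_intCast_mulVec_le_iff B β z).1 hy, hxy⟩

end TotallyUnimodular

lemma IsTU.isTotallyUnimodular {m n : ℕ} {A : Matrix (Fin m) (Fin n) ℤ} (hA : IsTU A) :
    A.IsTotallyUnimodular :=
  (isTotallyUnimodular_iff A).2 fun k f g ↦ by
    rcases hA k f g with h | h | h
    exacts [⟨0, h.symm⟩, ⟨1, h.symm⟩, ⟨-1, by simp [h]⟩]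

section NonnegativeOrthant

variable {R m n : Type*} [DecidableEq n]

lemma Matrix.IsTotallyUnimodular.fromRows_neg_one [CommRing R] {A : Matrix m n R}
    (hA : A.IsTotallyUnimodular) : (fromRows A (-1 : Matrix n n R)).IsTotallyUnimodular :=
  hA.fromRows_unitlike fun _ i ↦ ⟨i, -1, by ext j; by_cases h : i = j <;> simp [h]⟩

lemma Matrix.injective_mulVec_fromRows_neg_one [Fintype n] [Ring R] (A : Matrix m n R) :
    Injective (fromRows A (-1 : Matrix n n R)).mulVec := fun x y h ↦ funext fun j ↦ by
  simpa [fromRows_mulVec, neg_mulVec] using congrFun h (Sum.inr j)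

lemma Matrix.fromRows_neg_one_mulVec_le_iff [Fintype n] [Ring R] [PartialOrder R]
    [IsOrderedRing R] (A : Matrix m n R) (b : m → R) (x : n → R) :
    fromRows A (-1 : Matrix n n R) *ᵥ x ≤ Sum.elim b 0 ↔ A *ᵥ x ≤ b ∧ 0 ≤ x := by
  simp [fromRows_mulVec, neg_mulVec]

lemma Matrix.map_intCast_fromRows_neg_one [Ring R] (A : Matrix m n ℤ) :
    (fromRows A (-1 : Matrix n n ℤ)).map (Int.cast : ℤ → R) = fromRows (A.map Int.cast) (-1) := by
  simp [fromRows_map, Matrix.map_neg, Matrix.map_one]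

end NonnegativeOrthant

theorem tu_lp_sup_eq_ip_sup_general {m n : ℕ}
    (A : Matrix (Fin m) (Fin n) ℤ) (b : Fin m → ℤ) (c : Fin n → ℝ) (hTU : IsTU A)
    (hbdd : ∃ M : ℝ, ∀ x : Fin n → ℝ,
      (A.map (Int.cast : ℤ → ℝ)).mulVec x ≤ (fun i => (b i : ℝ)) → 0 ≤ x → c ⬝ᵥ x ≤ M) :
    sSup {s : ℝ | ∃ x : Fin n → ℝ,
        ((A.map (Int.cast : ℤ → ℝ)).mulVec x ≤ (fun i => (b i : ℝ)) ∧ 0 ≤ x) ∧ s = c ⬝ᵥ x} =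
      sSup {s : ℝ | ∃ x : Fin n → ℤ,
        (A.mulVec x ≤ b ∧ 0 ≤ x) ∧ s = c ⬝ᵥ (fun j => (x j : ℝ))} := by
  obtain ⟨M, hM⟩ := hbdd
  set B := fromRows A (-1 : Matrix (Fin n) (Fin n) ℤ)
  have hB : B.map (Int.cast : ℤ → ℝ) = fromRows (A.map Int.cast) (-1) :=
    map_intCast_fromRows_neg_one A
  have hβ : (fun i ↦ ((Sum.elim b 0 i : ℤ) : ℝ)) =
      Sum.elim (fun i ↦ (b i : ℝ)) (0 : Fin n → ℝ) := by
    ext (i | j) <;> simp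
  have hfeas (x : Fin n → ℝ) :
      B.map (Int.cast : ℤ → ℝ) *ᵥ x ≤ (fun i ↦ ((Sum.elim b 0 i : ℤ) : ℝ)) ↔
        A.map (Int.cast : ℤ → ℝ) *ᵥ x ≤ (fun i ↦ (b i : ℝ)) ∧ 0 ≤ x := by
    rw [hB, hβ, fromRows_neg_one_mulVec_le_iff]
  have hinj : Injective (B.map (Int.cast : ℤ → ℝ)).mulVec :=
    hB ▸ injective_mulVec_fromRows_neg_one _
  refine csSup_eq_csSup_of_forall_exists_le ?_ ?_
  · rintro _ ⟨x, hx, rfl⟩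
    obtain ⟨z, hz, hxz⟩ :=
      hTU.isTotallyUnimodular.fromRows_neg_one.exists_int_mulVec_le_dotProduct_le hinj
        (fun x hx ↦ hM x ((hfeas x).1 hx).1 ((hfeas x).1 hx).2) ((hfeas x).2 hx)
    exact ⟨_, ⟨z, (fromRows_neg_one_mulVec_le_iff A b z).1 hz, rfl⟩, hxz⟩
  · rintro _ ⟨z, ⟨hAz, hz⟩, rfl⟩
    exact ⟨_, ⟨_, ⟨(map_intCast_mulVec_le_iff A b z).2 hAz, fun j ↦ Int.cast_nonneg (hz j)⟩,
      rfl⟩, le_rfl⟩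

/-- If `A` is totally unimodular, `b` integral, and `max {cᵀx : Ax ≤ b, x ≥ 0}` is
feasible and bounded, then the supremum of `cᵀx` over real feasible points equals
the supremum over integer feasible points. -/
theorem tu_lp_sup_eq_ip_sup {m n : ℕ}
    (A : Matrix (Fin m) (Fin n) ℤ) (b : Fin m → ℤ) (c : Fin n → ℝ) (hTU : IsTU A)
    (hfeas : ∃ x : Fin n → ℝ,
      (A.map (Int.cast : ℤ → ℝ)).mulVec x ≤ (fun i => (b i : ℝ)) ∧ 0 ≤ x)
    (hbdd : ∃ M : ℝ, ∀ x : Fin n → ℝ,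
      (A.map (Int.cast : ℤ → ℝ)).mulVec x ≤ (fun i => (b i : ℝ)) → 0 ≤ x → c ⬝ᵥ x ≤ M) :
    sSup {s : ℝ | ∃ x : Fin n → ℝ,
        ((A.map (Int.cast : ℤ → ℝ)).mulVec x ≤ (fun i => (b i : ℝ)) ∧ 0 ≤ x) ∧ s = c ⬝ᵥ x} =
      sSup {s : ℝ | ∃ x : Fin n → ℤ,
        (A.mulVec x ≤ b ∧ 0 ≤ x) ∧ s = c ⬝ᵥ (fun j => (x j : ℝ))} :=
  tu_lp_sup_eq_ip_sup_general A b c hTU hbdd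
end

section
/- (Egerváry's theorem) Let G = (V,E) be a bipartite graph and let w : E → ℕ_0 be edge weights. Then the maximum weight w(M) over all matchings M of G equals the minimum value Σ_{v∈V} y_v over all w-vertex covers y of G. -/
/-!
Let `y` be a `w`-vertex cover of minimum value. For a stable set `S` of vertices with `y > 0`,
lowering `y` by one on `S` and raising it by one on the neighbours of `S` along tight edges
(`w_uv = y_u + y_v`) gives another cover, so minimality is Hall's condition in the graph of tight
edges. Hence on each side of the bipartition the vertices with `y > 0` can be matched along tight
edges, and the Mendelsohn–Dulmage argument merges the two one-sided matchings into one matching of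
tight edges covering every vertex with `y > 0`. Its weight is `∑ y`, and every matching weighs at
most `∑ y`.
-/

open Finset

namespace SimpleGraph

variable {V : Type*}

def IsWeightCover (G : SimpleGraph V) (w : Sym2 V → ℕ) (y : V → ℕ) : Prop :=
  ∀ u v, G.Adj u v → w s(u, v) ≤ y u + y v

def IsEdgeMatching (G : SimpleGraph V) (M : Finset (Sym2 V)) : Prop :=
  (∀ e ∈ M, e ∈ G.edgeSet) ∧ ∀ e₁ ∈ M, ∀ e₂ ∈ M, e₁ ≠ e₂ → ∀ v : V, ¬(v ∈ e₁ ∧ v ∈ e₂)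

theorem IsEdgeMatching.mono {G H : SimpleGraph V} {M : Finset (Sym2 V)} (hHG : H ≤ G)
    (hM : H.IsEdgeMatching M) : G.IsEdgeMatching M :=
  ⟨fun e he => edgeSet_mono hHG (hM.1 e he), hM.2⟩

section WeakDuality

variable {G : SimpleGraph V} {w : Sym2 V → ℕ} {y : V → ℕ}

theorem IsWeightCover.le_sum_toFinset [DecidableEq V] (hy : G.IsWeightCover w y) {e : Sym2 V}
    (he : e ∈ G.edgeSet) : w e ≤ ∑ v ∈ e.toFinset, y v := by
  induction e using Sym2.ind with
  | _ u v => rw [Sym2.toFinset_mk_eq, sum_pair (G.ne_of_adj he)]; exact hy u v he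

theorem IsEdgeMatching.pairwiseDisjoint_toFinset [DecidableEq V] {M : Finset (Sym2 V)}
    (hM : G.IsEdgeMatching M) : (M : Set (Sym2 V)).PairwiseDisjoint Sym2.toFinset :=
  fun e₁ h₁ e₂ h₂ hne => Finset.disjoint_left.2 fun v hv₁ hv₂ =>
    hM.2 e₁ h₁ e₂ h₂ hne v ⟨Sym2.mem_toFinset.1 hv₁, Sym2.mem_toFinset.1 hv₂⟩

theorem IsEdgeMatching.sum_le [Fintype V] {M : Finset (Sym2 V)} (hM : G.IsEdgeMatching M)
    (hy : G.IsWeightCover w y) : ∑ e ∈ M, w e ≤ ∑ v, y v := by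
  classical
  calc ∑ e ∈ M, w e ≤ ∑ e ∈ M, ∑ v ∈ e.toFinset, y v :=
        sum_le_sum fun e he => hy.le_sum_toFinset (hM.1 e he)
    _ = ∑ v ∈ M.biUnion Sym2.toFinset, y v := (sum_biUnion hM.pairwiseDisjoint_toFinset).symm
    _ ≤ ∑ v, y v := sum_le_sum_of_subset (subset_univ _)

end WeakDuality

/-- The matching `{s(v, φ v) | v ∈ D}`, each edge oriented away from its endpoint in `D`. -/
structure IsMatchingMap (H : SimpleGraph V) (D : Finset V) (φ : V → V) : Prop where
  adj : ∀ v ∈ D, H.Adj v (φ v)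
  injOn : Set.InjOn φ D
  map_notMem : ∀ v ∈ D, φ v ∉ D

namespace IsMatchingMap

variable {H : SimpleGraph V} {D : Finset V} {φ : V → V}

theorem injOn_edge (h : H.IsMatchingMap D φ) : Set.InjOn (fun v => s(v, φ v)) D := by
  intro v hv v' hv' heq
  rcases Sym2.eq_iff.1 heq with ⟨rfl, -⟩ | ⟨rfl, -⟩
  · rfl
  · exact absurd hv (h.map_notMem v' hv')

theorem isEdgeMatching [DecidableEq V] (h : H.IsMatchingMap D φ) :
    H.IsEdgeMatching (D.image fun v => s(v, φ v)) := by
  refine ⟨?_, ?_⟩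
  · simp only [mem_image]
    rintro _ ⟨v, hv, rfl⟩
    exact h.adj v hv
  · simp only [mem_image]
    rintro _ ⟨v, hv, rfl⟩ _ ⟨v', hv', rfl⟩ hne x ⟨hx, hx'⟩
    have hvv' : v ≠ v' := fun hvv' => hne (hvv' ▸ rfl)
    rw [Sym2.mem_iff] at hx hx'
    rcases hx with rfl | rfl <;> rcases hx' with heq | heq
    · exact hvv' heq
    · exact h.map_notMem v' hv' (heq ▸ hv)
    · exact h.map_notMem v hv (heq ▸ hv')
    · exact hvv' (h.injOn hv hv' heq)

theorem sum_union_image [DecidableEq V] (h : H.IsMatchingMap D φ) (y : V → ℕ) :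
    ∑ v ∈ D ∪ D.image φ, y v = ∑ v ∈ D, (y v + y (φ v)) := by
  have hdisj : Disjoint D (D.image φ) := by
    simp only [Finset.disjoint_right, mem_image]
    rintro _ ⟨v, hv, rfl⟩
    exact h.map_notMem v hv
  rw [sum_union hdisj, sum_image h.injOn, sum_add_distrib]

theorem union [DecidableEq V] {D' : Finset V} {φ' : V → V} (h : H.IsMatchingMap D φ)
    (h' : H.IsMatchingMap D' φ') (hD : Disjoint D D') (hφD' : ∀ v ∈ D, φ v ∉ D')
    (hφ'D : ∀ v ∈ D', φ' v ∉ D) (hφφ' : ∀ v ∈ D, ∀ v' ∈ D', φ v ≠ φ' v') :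
    H.IsMatchingMap (D ∪ D') (fun v => if v ∈ D then φ v else φ' v) := by
  have hD' : ∀ v ∈ D', v ∉ D := fun v hv hvD => Finset.disjoint_left.1 hD hvD hv
  refine ⟨?_, ?_, ?_⟩
  · intro v hv
    by_cases hvD : v ∈ D
    · simpa [hvD] using h.adj v hvD
    · simpa [hvD] using h'.adj v ((mem_union.1 hv).resolve_left hvD)
  · intro v hv v' hv' heq
    simp only [coe_union, Set.mem_union, mem_coe] at hv hv' heq
    rcases hv with hv | hv <;> rcases hv' with hv' | hv'
    · simpa [hv, hv', h.injOn.eq_iff hv hv'] using heq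
    · exact absurd (by simpa [hv, hD' v' hv'] using heq) (hφφ' v hv v' hv')
    · exact absurd (by simpa [hv', hD' v hv] using heq.symm) (hφφ' v' hv' v hv)
    · simpa [hD' v hv, hD' v' hv', h'.injOn.eq_iff hv hv'] using heq
  · intro v hv
    simp only [mem_union, not_or]
    by_cases hvD : v ∈ D
    · simpa [hvD] using ⟨h.map_notMem v hvD, hφD' v hvD⟩
    · have hvD' := (mem_union.1 hv).resolve_left hvD
      simpa [hvD] using ⟨hφ'D v hvD', h'.map_notMem v hvD'⟩

end IsMatchingMap

section MendelsohnDulmage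

variable {X Y : Finset V} {f g : V → V}

/-- The vertices `b ∈ Y` reached from a vertex of `Y` missed by `f` by alternately following
`g` and `f`. Combining one-sided matchings `f` on `X` and `g` on `Y`, the `g`-edge is used at
these vertices and the `f`-edge everywhere else. -/
inductive MDReachable (X Y : Finset V) (f g : V → V) : V → Prop
  | base {b : V} : b ∈ Y → (∀ a ∈ X, f a ≠ b) → MDReachable X Y f g b
  | step {b' b : V} : MDReachable X Y f g b' → b ∈ Y → g b' ∈ X → f (g b') = b →
      MDReachable X Y f g b

theorem MDReachable.mem {b : V} (h : MDReachable X Y f g b) : b ∈ Y := by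
  cases h <;> assumption

theorem MDReachable.exists_apply_eq (hf : Set.InjOn f X) {a b : V}
    (h : MDReachable X Y f g b) (ha : a ∈ X) (hab : f a = b) :
    ∃ b', MDReachable X Y f g b' ∧ g b' = a := by
  cases h with
  | base _ hmiss => exact absurd hab (hmiss a ha)
  | step hb' _ hgb' hfg => exact ⟨_, hb', hf hgb' ha (hfg.trans hab.symm)⟩

theorem exists_isMatchingMap_of_injOn [DecidableEq V] {H : SimpleGraph V} {s : Set V}
    (hH : H.IsBipartiteWith s sᶜ) (hX : ↑X ⊆ s) (hY : ↑Y ⊆ sᶜ)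
    (hf : Set.InjOn f X) (hg : Set.InjOn g Y)
    (hfadj : ∀ a ∈ X, H.Adj a (f a)) (hgadj : ∀ b ∈ Y, H.Adj b (g b)) :
    ∃ D φ, H.IsMatchingMap D φ ∧ X ∪ Y ⊆ D ∪ D.image φ := by
  classical
  set R := Y.filter (MDReachable X Y f g)
  set A := X.filter fun a => ∀ b ∈ R, g b ≠ a
  have hRY : R ⊆ Y := filter_subset _ _
  have hAX : A ⊆ X := filter_subset _ _
  have hRs : ∀ b ∈ R, b ∉ s := fun b hb => hY (hRY hb)
  have hAs : ∀ a ∈ A, a ∈ s := fun a ha => hX (hAX ha)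
  have hgs : ∀ b ∈ R, g b ∈ s := fun b hb => hH.symm.mem_of_mem_adj (hRs b hb) (hgadj b (hRY hb))
  have hfs : ∀ a ∈ A, f a ∉ s := fun a ha => hH.mem_of_mem_adj (hAs a ha) (hfadj a (hAX ha))
  have hgR : H.IsMatchingMap R g :=
    ⟨fun b hb => hgadj b (hRY hb), hg.mono (coe_subset.2 hRY), fun b hb h => hRs _ h (hgs b hb)⟩
  have hfA : H.IsMatchingMap A f :=
    ⟨fun a ha => hfadj a (hAX ha), hf.mono (coe_subset.2 hAX), fun a ha h => hfs a ha (hAs _ h)⟩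
  refine ⟨_, _, hgR.union hfA (Finset.disjoint_left.2 fun b hb ha => hRs b hb (hAs b ha))
    (fun b hb ha => (mem_filter.1 ha).2 b hb rfl) ?_
    (fun b hb a ha h => hfs a ha (h ▸ hgs b hb)), ?_⟩
  · intro a ha hfa
    obtain ⟨b', hb', rfl⟩ := (mem_filter.1 hfa).2.exists_apply_eq hf (hAX ha) rfl
    exact (mem_filter.1 ha).2 b' (mem_filter.2 ⟨hb'.mem, hb'⟩) rfl
  · intro v hv
    simp only [mem_union, mem_image] at hv ⊢
    rcases hv with haX | hbY
    · by_cases hvg : ∃ b ∈ R, g b = v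
      · obtain ⟨b, hbR, rfl⟩ := hvg
        exact Or.inr ⟨b, Or.inl hbR, by simp [hbR]⟩
      · exact Or.inl (Or.inr (mem_filter.2 ⟨haX, fun b hb h => hvg ⟨b, hb, h⟩⟩))
    · by_cases hreach : MDReachable X Y f g v
      · exact Or.inl (Or.inl (mem_filter.2 ⟨hbY, hreach⟩))
      · obtain ⟨a, haX, rfl⟩ : ∃ a ∈ X, f a = v := by
          by_contra! hmiss
          exact hreach (.base hbY hmiss)
        have haA : a ∈ A := mem_filter.2 ⟨haX, fun b hbR hba =>
          hreach (.step (mem_filter.1 hbR).2 hbY (hba ▸ haX) (hba ▸ rfl))⟩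
        have haR : a ∉ R := fun h => hRs a h (hAs a haA)
        exact Or.inr ⟨a, Or.inr haA, by simp [haR]⟩

end MendelsohnDulmage

theorem exists_injOn_adj_of_forall_card_le [Fintype V] [DecidableEq V] {H : SimpleGraph V}
    [DecidableRel H.Adj] {X : Finset V} (hX : ∀ S ⊆ X, #S ≤ #{b | ∃ a ∈ S, H.Adj a b}) :
    ∃ f : V → V, Set.InjOn f X ∧ ∀ a ∈ X, H.Adj a (f a) := by
  obtain ⟨f, hf, hadj⟩ :=
    (Fintype.all_card_le_filter_rel_iff_exists_injective fun (a : X) b => H.Adj a b).1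
      fun A => by
        simpa using hX (A.map (.subtype _)) fun a ha => by
          obtain ⟨a, -, rfl⟩ := mem_map.1 ha
          exact a.2
  refine ⟨fun v => if hv : v ∈ X then f ⟨v, hv⟩ else v, fun a ha a' ha' h => ?_,
    fun a ha => by simpa [ha] using hadj ⟨a, ha⟩⟩
  exact congrArg Subtype.val (hf (by simpa [mem_coe.1 ha, mem_coe.1 ha'] using h))

section TightGraph

def tightGraph (G : SimpleGraph V) (w : Sym2 V → ℕ) (y : V → ℕ) : SimpleGraph V where
  Adj u v := G.Adj u v ∧ w s(u, v) = y u + y v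
  symm.symm _ _ h := ⟨h.1.symm, by rw [Sym2.eq_swap, h.2, add_comm]⟩
  loopless.irrefl v h := G.loopless.irrefl v h.1

variable {G : SimpleGraph V} {w : Sym2 V → ℕ} {y : V → ℕ}

@[simp]
theorem tightGraph_adj {u v : V} :
    (G.tightGraph w y).Adj u v ↔ G.Adj u v ∧ w s(u, v) = y u + y v :=
  Iff.rfl

instance [DecidableRel G.Adj] : DecidableRel (G.tightGraph w y).Adj :=
  fun _ _ => decidable_of_iff' _ tightGraph_adj

theorem tightGraph_le : G.tightGraph w y ≤ G := fun _ _ h => (tightGraph_adj.1 h).1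

theorem IsWeightCover.shift [DecidableEq V] (hy : G.IsWeightCover w y) {S N : Finset V}
    (hSpos : ∀ a ∈ S, 0 < y a) (hSind : ∀ a ∈ S, ∀ b ∈ S, ¬G.Adj a b)
    (hN : ∀ a ∈ S, ∀ b, (G.tightGraph w y).Adj a b → b ∈ N) :
    G.IsWeightCover w fun v => y v - (if v ∈ S then 1 else 0) + (if v ∈ N then 1 else 0) := by
  set y' : V → ℕ := fun v => y v - (if v ∈ S then 1 else 0) + (if v ∈ N then 1 else 0)
  have hside : ∀ u v, G.Adj u v → u ∈ S → w s(u, v) ≤ y' u + y' v := by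
    intro u v huv hu
    have hv : v ∉ S := fun hv => hSind u hu v hv huv
    have := hy u v huv
    have := hSpos u hu
    by_cases htight : w s(u, v) = y u + y v
    · have hvN := hN u hu v (tightGraph_adj.2 ⟨huv, htight⟩)
      simp only [y', hu, hv, hvN, if_true, if_false]
      split_ifs <;> omega
    · simp only [y', hu, hv, if_true, if_false]
      split_ifs <;> omega
  intro u v huv
  by_cases hu : u ∈ S
  · exact hside u v huv hu
  by_cases hv : v ∈ S
  · rw [Sym2.eq_swap, add_comm]
    exact hside v u huv.symm hv
  have := hy u v huv
  simp only [y', hu, hv, if_false]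
  split_ifs <;> omega

theorem card_le_card_tightGraph_adj [Fintype V] [DecidableEq V] [DecidableRel G.Adj]
    (hy : G.IsWeightCover w y) (hmin : ∀ z, G.IsWeightCover w z → ∑ v, y v ≤ ∑ v, z v)
    {S : Finset V} (hSpos : ∀ a ∈ S, 0 < y a) (hSind : ∀ a ∈ S, ∀ b ∈ S, ¬G.Adj a b) :
    #S ≤ #{b | ∃ a ∈ S, (G.tightGraph w y).Adj a b} := by
  set N : Finset V := {b | ∃ a ∈ S, (G.tightGraph w y).Adj a b}
  have hindicator (T : Finset V) : ∑ v, (if v ∈ T then 1 else 0) = #T := by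
    rw [Fintype.sum_ite_mem, card_eq_sum_ones]
  have hlower : ∑ v, (y v - (if v ∈ S then 1 else 0)) + #S = ∑ v, y v := by
    rw [← hindicator, ← sum_add_distrib]
    refine sum_congr rfl fun v _ => ?_
    by_cases hv : v ∈ S
    · simp only [hv, if_true]
      have := hSpos v hv
      omega
    · simp only [hv, if_false, Nat.sub_zero, Nat.add_zero]
  have hshift := hmin _ <| hy.shift (N := N) hSpos hSind fun a ha b hab =>
    mem_filter.2 ⟨mem_univ b, a, ha, hab⟩
  rw [sum_add_distrib, hindicator] at hshift
  omega

theorem exists_injOn_tightGraph_adj [Fintype V] [DecidableEq V] [DecidableRel G.Adj]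
    (hy : G.IsWeightCover w y) (hmin : ∀ z, G.IsWeightCover w z → ∑ v, y v ≤ ∑ v, z v)
    {X : Finset V} (hXpos : ∀ a ∈ X, 0 < y a) (hXind : ∀ a ∈ X, ∀ b ∈ X, ¬G.Adj a b) :
    ∃ f : V → V, Set.InjOn f X ∧ ∀ a ∈ X, (G.tightGraph w y).Adj a (f a) :=
  exists_injOn_adj_of_forall_card_le fun _ hS => card_le_card_tightGraph_adj hy hmin
    (fun a ha => hXpos a (hS ha)) fun a ha b hb => hXind a (hS ha) b (hS hb)

end TightGraph

variable [Fintype V]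

theorem exists_isWeightCover_minimal (G : SimpleGraph V) (w : Sym2 V → ℕ) :
    ∃ y, G.IsWeightCover w y ∧ ∀ z, G.IsWeightCover w z → ∑ v, y v ≤ ∑ v, z v := by
  classical
  have hcover : G.IsWeightCover w fun u => univ.sup fun v => w s(u, v) := fun u v _ =>
    (le_sup (f := fun v => w s(u, v)) (mem_univ v)).trans (Nat.le_add_right _ _)
  obtain ⟨y, hy, hmin⟩ :=
    (measure fun y : V → ℕ => ∑ v, y v).wf.has_min {y | G.IsWeightCover w y} ⟨_, hcover⟩
  exact ⟨y, hy, fun z hz => not_lt.1 (hmin z hz)⟩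

variable {G : SimpleGraph V} {w : Sym2 V → ℕ}

theorem exists_isEdgeMatching_sum_eq {s : Set V} (hG : G.IsBipartiteWith s sᶜ)
    {y : V → ℕ} (hy : G.IsWeightCover w y)
    (hmin : ∀ z, G.IsWeightCover w z → ∑ v, y v ≤ ∑ v, z v) :
    ∃ M, G.IsEdgeMatching M ∧ ∑ e ∈ M, w e = ∑ v, y v := by
  classical
  set X : Finset V := {v | v ∈ s ∧ 0 < y v}
  set Y : Finset V := {v | v ∉ s ∧ 0 < y v}
  have hX : ↑X ⊆ s := fun v hv => (mem_filter.1 hv).2.1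
  have hY : ↑Y ⊆ sᶜ := fun v hv => (mem_filter.1 hv).2.1
  obtain ⟨f, hf, hfadj⟩ := exists_injOn_tightGraph_adj hy hmin (X := X)
    (fun a ha => (mem_filter.1 ha).2.2) fun a ha b hb hab => hG.mem_of_mem_adj (hX ha) hab (hX hb)
  obtain ⟨g, hg, hgadj⟩ := exists_injOn_tightGraph_adj hy hmin (X := Y)
    (fun a ha => (mem_filter.1 ha).2.2) fun a ha b hb hab =>
      hY hb (hG.symm.mem_of_mem_adj (hY ha) hab)
  have hT : (G.tightGraph w y).IsBipartiteWith s sᶜ :=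
    ⟨hG.disjoint, fun _ _ h => hG.mem_of_adj (tightGraph_le h)⟩
  obtain ⟨D, φ, hφ, hcover⟩ := exists_isMatchingMap_of_injOn hT hX hY hf hg hfadj hgadj
  refine ⟨_, hφ.isEdgeMatching.mono tightGraph_le, ?_⟩
  calc ∑ e ∈ D.image fun v => s(v, φ v), w e = ∑ v ∈ D, w s(v, φ v) := sum_image hφ.injOn_edge
    _ = ∑ v ∈ D, (y v + y (φ v)) := sum_congr rfl fun v hv => (tightGraph_adj.1 (hφ.adj v hv)).2
    _ = ∑ v ∈ D ∪ D.image φ, y v := (hφ.sum_union_image y).symm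
    _ = ∑ v, y v := by
      refine sum_subset (subset_univ _) fun v _ hv => ?_
      by_contra hy0
      have hvXY : v ∈ X ∪ Y := by
        by_cases hvs : v ∈ s <;> simp [X, Y, hvs, Nat.pos_of_ne_zero hy0]
      exact hv (hcover hvXY)

end SimpleGraph

theorem egervary_general {V : Type*} [Fintype V]
    (G : SimpleGraph V)
    (hbip : ∃ s : Set V, ∀ u v : V, G.Adj u v → (u ∈ s ∧ v ∉ s) ∨ (u ∉ s ∧ v ∈ s))
    (w : Sym2 V → ℕ) :
    ∃ vopt : ℕ,
      IsGreatest {k : ℕ | ∃ M : Finset (Sym2 V),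
          (∀ e ∈ M, e ∈ G.edgeSet) ∧
          (∀ e₁ ∈ M, ∀ e₂ ∈ M, e₁ ≠ e₂ → ∀ v : V, ¬(v ∈ e₁ ∧ v ∈ e₂)) ∧
          k = ∑ e ∈ M, w e} vopt ∧
      IsLeast {k : ℕ | ∃ y : V → ℕ,
          (∀ u v : V, G.Adj u v → w s(u, v) ≤ y u + y v) ∧
          k = ∑ v : V, y v} vopt := by
  obtain ⟨s, hs⟩ := hbip
  obtain ⟨y, hy, hmin⟩ := SimpleGraph.exists_isWeightCover_minimal G w
  obtain ⟨M, hM, hMy⟩ :=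
    SimpleGraph.exists_isEdgeMatching_sum_eq ⟨disjoint_compl_right, hs⟩ hy hmin
  refine ⟨∑ v, y v, ⟨⟨M, hM.1, hM.2, hMy.symm⟩, ?_⟩, ⟨⟨y, hy, rfl⟩, ?_⟩⟩
  · rintro _ ⟨M', hM'G, hM'disj, rfl⟩
    exact SimpleGraph.IsEdgeMatching.sum_le ⟨hM'G, hM'disj⟩ hy
  · rintro _ ⟨z, hz, rfl⟩
    exact hmin z hz

/-- Egerváry's theorem: in a bipartite graph with edge weights `w : E → ℕ`, the
maximum weight of a matching equals the minimum value of a `w`-vertex cover. -/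
theorem egervary {V : Type*} [Fintype V] [DecidableEq V]
    (G : SimpleGraph V)
    (hbip : ∃ s : Set V, ∀ u v : V, G.Adj u v → (u ∈ s ∧ v ∉ s) ∨ (u ∉ s ∧ v ∈ s))
    (w : Sym2 V → ℕ) :
    ∃ vopt : ℕ,
      IsGreatest {k : ℕ | ∃ M : Finset (Sym2 V),
          (∀ e ∈ M, e ∈ G.edgeSet) ∧
          (∀ e₁ ∈ M, ∀ e₂ ∈ M, e₁ ≠ e₂ → ∀ v : V, ¬(v ∈ e₁ ∧ v ∈ e₂)) ∧
          k = ∑ e ∈ M, w e} vopt ∧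
      IsLeast {k : ℕ | ∃ y : V → ℕ,
          (∀ u v : V, G.Adj u v → w s(u, v) ≤ y u + y v) ∧
          k = ∑ v : V, y v} vopt :=
  egervary_general G hbip w
end
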